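/- arXiv:0802.3836 — 4 statements merged into one kernel-verified Lean document; each statement's English description precedes it below -/
import Mathlib

section
/- Let $(A,L)$ be a Lie-Rinehart algebra, $A'$ a commutative $R$-algebra, $\varphi\colon A\to A'$ an algebra morphism, and $\widetilde\omega\colon L\to \mathrm{Der}(A')$ an action of the $R$-Lie algebra $L$ on $A'$ by derivations making $\varphi$ a morphism of $L$-modules, and suppose $\widetilde\omega$ is $A$-linear, where $\mathrm{Der}(A')$ is an $A$-module via $\varphi$. Then the pairing on $A'\otimes_R L$ given by $u\otimes\alpha \otimes v\otimes\beta \mapsto uv\otimes[\alpha,\beta] - (v\beta(u))\otimes\alpha + (u\alpha(v))\otimes\beta$ descends to a well-defined $R$-Lie algebra bracket on $L' = A'\otimes_A L$. -/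
open TensorProduct

universe u v w x y

section LRdefs

variable (R : Type u) [CommRing R]

/-- `φ : A → A'` is (the function underlying) a morphism of `R`-algebras. -/
def IsAlgHomFun {A : Type v} {A' : Type w} [CommRing A] [Algebra R A] [Ring A']
    [Algebra R A'] (φ : A → A') : Prop :=
  IsLinearMap R φ ∧ φ 1 = 1 ∧ ∀ a b : A, φ (a * b) = φ a * φ b

/-- `(A, L)`, with `A`-action `sm` on `L`, bracket `br` and anchor `an`, is a
Lie-Rinehart algebra over `R` (an `(R,A)`-Lie algebra structure on `L`). -/
def IsLR (A : Type v) [CommRing A] [Algebra R A]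
    (L : Type w) [AddCommGroup L] [Module R L]
    (sm : A → L → L) (br : L → L → L) (an : L → A → A) : Prop :=
  (∀ a : A, IsLinearMap R (sm a)) ∧
  (∀ x : L, sm 1 x = x) ∧
  (∀ (a b : A) (x : L), sm (a * b) x = sm a (sm b x)) ∧
  (∀ (a b : A) (x : L), sm (a + b) x = sm a x + sm b x) ∧
  (∀ (r : R) (a : A) (x : L), sm (r • a) x = r • sm a x) ∧
  (∀ x : L, IsLinearMap R (br x)) ∧
  (∀ y : L, IsLinearMap R fun x : L => br x y) ∧
  (∀ x : L, br x x = 0) ∧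
  (∀ x y z : L, br x (br y z) = br (br x y) z + br y (br x z)) ∧
  (∀ x : L, IsLinearMap R (an x)) ∧
  (∀ a : A, IsLinearMap R fun x : L => an x a) ∧
  (∀ (x : L) (a b : A), an x (a * b) = an x a * b + a * an x b) ∧
  (∀ (x y : L) (a : A), an (br x y) a = an x (an y a) - an y (an x a)) ∧
  (∀ (a : A) (x : L) (b : A), an (sm a x) b = a * an x b) ∧
  (∀ (x : L) (a : A) (y : L), br x (sm a y) = sm a (br x y) + sm (an x a) y)

/-- `(φ, ψ)` is a morphism of Lie-Rinehart algebras. -/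
def IsLRHom {A : Type v} [CommRing A] [Algebra R A] {L : Type w} [AddCommGroup L]
    [Module R L] {A' : Type x} [CommRing A'] [Algebra R A'] {L' : Type y}
    [AddCommGroup L'] [Module R L']
    (sm : A → L → L) (br : L → L → L) (an : L → A → A)
    (sm' : A' → L' → L') (br' : L' → L' → L') (an' : L' → A' → A')
    (φ : A → A') (ψ : L → L') : Prop :=
  IsAlgHomFun R φ ∧ IsLinearMap R ψ ∧
  (∀ x y : L, ψ (br x y) = br' (ψ x) (ψ y)) ∧
  (∀ (a : A) (x : L), ψ (sm a x) = sm' (φ a) (ψ x)) ∧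
  (∀ (x : L) (a : A), φ (an x a) = an' (ψ x) (φ a))

/-- `(U, ιA, ιL)` is the universal algebra of the Lie-Rinehart algebra
`(A, L, sm, br, an)`: it satisfies the generating relations and is universal
among `R`-algebras equipped with such a pair of maps. -/
def IsUniversalLR (A : Type v) [CommRing A] [Algebra R A]
    (L : Type w) [AddCommGroup L] [Module R L]
    (sm : A → L → L) (br : L → L → L) (an : L → A → A)
    (U : Type x) [Ring U] [Algebra R U] (ιA : A → U) (ιL : L → U) : Prop :=
  IsAlgHomFun R ιA ∧ IsLinearMap R ιL ∧
  (∀ (a : A) (x : L), ιA a * ιL x = ιL (sm a x)) ∧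
  (∀ x y : L, ιL (br x y) = ιL x * ιL y - ιL y * ιL x) ∧
  (∀ (x : L) (a : A), ιL x * ιA a - ιA a * ιL x = ιA (an x a)) ∧
  ∀ (B : Type x) [Ring B] [Algebra R B] (φA : A → B) (φL : L → B),
    IsAlgHomFun R φA → IsLinearMap R φL →
    (∀ (a : A) (x : L), φA a * φL x = φL (sm a x)) →
    (∀ x y : L, φL (br x y) = φL x * φL y - φL y * φL x) →
    (∀ (x : L) (a : A), φL x * φA a - φA a * φL x = φA (an x a)) →
    ∃! f : U →ₐ[R] B, (∀ a : A, f (ιA a) = φA a) ∧ ∀ x : L, f (ιL x) = φL x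

end LRdefs

/-!
On pure tensors the bracket is given by the formula, which is additive in each of `u, α, v, β`
and `A`-balanced in `(u, α)` and in `(v, β)`: moving `a` across `⊗` changes the first term by the
anchor term of the Leibniz rule of `L`, and this is exactly compensated by the Leibniz rule of the
derivation `ω' α` (resp. `ω' β`) on `a • v = φ a * v` (resp. `a • u`), since `ω' x ∘ φ = φ ∘ an x`.
So it descends to a biadditive map on `A' ⊗[A] L`. Bilinearity over `R`, antisymmetry and the
Jacobi identity are identities between multiadditive maps, hence need only be checked on pure
tensors, where they follow from those of `L` and from `ω'` being a Lie algebra action.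
-/

namespace TensorProduct

variable {A M N : Type*} [CommSemiring A] [AddCommMonoid M] [Module A M] [AddCommMonoid N]
  [Module A N]

theorem addMonoidHom_ext {P : Type*} [AddZeroClass P] {f g : M ⊗[A] N →+ P}
    (H : ∀ m n, f (m ⊗ₜ n) = g (m ⊗ₜ n)) : f = g :=
  AddMonoidHom.ext fun z =>
    z.induction_on (by simp only [map_zero]) H fun x y hx hy => by simp only [map_add, hx, hy]

theorem exists_addMonoidHom_tmul_eq {P : Type*} [AddCommGroup P] (f : M → N → P)
    (add_left : ∀ m m' n, f (m + m') n = f m n + f m' n)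
    (add_right : ∀ m n n', f m (n + n') = f m n + f m n')
    (balanced : ∀ (a : A) m n, f (a • m) n = f m (a • n)) :
    ∃ F : M ⊗[A] N →+ P, ∀ m n, F (m ⊗ₜ n) = f m n :=
  ⟨liftAddHom (AddMonoidHom.mk' (fun m => AddMonoidHom.mk' (f m) (add_right m))
    fun m m' => AddMonoidHom.ext fun n => add_left m m' n) balanced, fun _ _ => rfl⟩

theorem induction_on₂ {M' N' : Type*} [AddCommMonoid M'] [Module A M'] [AddCommMonoid N']
    [Module A N'] {p : M ⊗[A] N → M' ⊗[A] N' → Prop} (z : M ⊗[A] N) (w : M' ⊗[A] N')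
    (tmul : ∀ m n m' n', p (m ⊗ₜ n) (m' ⊗ₜ n'))
    (add_left : ∀ x y w, p x w → p y w → p (x + y) w)
    (add_right : ∀ z x y, p z x → p z y → p z (x + y)) : p z w := by
  have tmul_left : ∀ m n, p (m ⊗ₜ n) w := fun m n => by
    induction w using TensorProduct.induction_on with
    | zero => rw [← zero_tmul M' (0 : N')]; exact tmul m n 0 0
    | tmul m' n' => exact tmul m n m' n'
    | add x y hx hy => exact add_right _ x y hx hy
  induction z using TensorProduct.induction_on with
  | zero => rw [← zero_tmul M (0 : N)]; exact tmul_left 0 0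
  | tmul m n => exact tmul_left m n
  | add x y hx hy => exact add_left x y w hx hy

end TensorProduct

namespace IsLR

variable {R A L : Type*} [CommRing R] [CommRing A] [Algebra R A] [AddCommGroup L] [Module R L]
  [Module A L] {br : L → L → L} {an : L → A → A}

theorem br_add_left (h : IsLR R A L (· • ·) br an) (x y z : L) :
    br (x + y) z = br x z + br y z :=
  let ⟨_, _, _, _, _, _, hlin, _⟩ := h
  (hlin z).map_add x y

theorem br_add_right (h : IsLR R A L (· • ·) br an) (x y z : L) :
    br x (y + z) = br x y + br x z :=
  let ⟨_, _, _, _, _, hlin, _⟩ := h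
  (hlin x).map_add y z

theorem br_self (h : IsLR R A L (· • ·) br an) (x : L) : br x x = 0 :=
  let ⟨_, _, _, _, _, _, _, hself, _⟩ := h
  hself x

theorem leibniz_br (h : IsLR R A L (· • ·) br an) (x y z : L) :
    br x (br y z) = br (br x y) z + br y (br x z) :=
  let ⟨_, _, _, _, _, _, _, _, hjac, _⟩ := h
  hjac x y z

theorem br_smul_right (h : IsLR R A L (· • ·) br an) (x : L) (a : A) (y : L) :
    br x (a • y) = a • br x y + an x a • y :=
  let ⟨_, _, _, _, _, _, _, _, _, _, _, _, _, _, hleib⟩ := h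
  hleib x a y

theorem br_swap (h : IsLR R A L (· • ·) br an) (x y : L) : br y x = -br x y := by
  have hsum := h.br_self (x + y)
  rw [h.br_add_left, h.br_add_right, h.br_add_right, h.br_self, h.br_self, zero_add,
    add_zero] at hsum
  exact eq_neg_of_add_eq_zero_right hsum

theorem br_smul_left (h : IsLR R A L (· • ·) br an) (a : A) (x y : L) :
    br (a • x) y = a • br x y - an y a • x := by
  rw [h.br_swap, h.br_smul_right, h.br_swap x y, smul_neg]
  abel

end IsLR

section Bracket

variable {A A' L : Type*} [CommRing A] [CommRing A'] [Algebra A A'] [AddCommGroup L] [Module A L]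

variable (A) in
def tmulBracket (br : L → L → L) (ω : L → A' → A') (u : A') (α : L) (v : A') (β : L) :
    A' ⊗[A] L :=
  (u * v) ⊗ₜ br α β - (v * ω β u) ⊗ₜ α + (u * ω α v) ⊗ₜ β

variable {br : L → L → L} {ω : L → A' → A'}

section Linearity

variable {R : Type*} [CommRing R] [Algebra R A'] [SMulCommClass A R A']
  {Φ : A' ⊗[A] L →+ A' ⊗[A] L →+ A' ⊗[A] L}

theorem tmulBracket_smul_left (hlin : ∀ x : L, IsLinearMap R (ω x)) (r : R) (u : A') (α : L)
    (v : A') (β : L) : tmulBracket A br ω (r • u) α v β = r • tmulBracket A br ω u α v β := by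
  simp only [tmulBracket, smul_sub, smul_add, smul_tmul', smul_mul_assoc, (hlin _).map_smul,
    mul_smul_comm]

theorem tmulBracket_smul_right (hlin : ∀ x : L, IsLinearMap R (ω x)) (r : R) (u : A') (α : L)
    (v : A') (β : L) : tmulBracket A br ω u α (r • v) β = r • tmulBracket A br ω u α v β := by
  simp only [tmulBracket, smul_sub, smul_add, smul_tmul', smul_mul_assoc, (hlin _).map_smul,
    mul_smul_comm]

theorem map_smul_left_of_tmulBracket (hlin : ∀ x : L, IsLinearMap R (ω x))
    (hΦ : ∀ u α v β, Φ (u ⊗ₜ α) (v ⊗ₜ β) = tmulBracket A br ω u α v β) (r : R)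
    (z w : A' ⊗[A] L) : Φ (r • z) w = r • Φ z w := by
  induction z, w using TensorProduct.induction_on₂ with
  | tmul u α v β => rw [smul_tmul', hΦ, hΦ, tmulBracket_smul_left hlin]
  | add_left x y w hx hy => rw [smul_add, map_add, AddMonoidHom.add_apply, hx, hy, map_add,
      AddMonoidHom.add_apply, smul_add]
  | add_right z x y hx hy => rw [map_add, map_add, hx, hy, smul_add]

theorem map_smul_right_of_tmulBracket (hlin : ∀ x : L, IsLinearMap R (ω x))
    (hΦ : ∀ u α v β, Φ (u ⊗ₜ α) (v ⊗ₜ β) = tmulBracket A br ω u α v β) (r : R)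
    (z w : A' ⊗[A] L) : Φ z (r • w) = r • Φ z w := by
  induction z, w using TensorProduct.induction_on₂ with
  | tmul u α v β => rw [smul_tmul', hΦ, hΦ, tmulBracket_smul_right hlin]
  | add_left x y w hx hy => rw [map_add, AddMonoidHom.add_apply, AddMonoidHom.add_apply, hx, hy,
      smul_add]
  | add_right z x y hx hy => rw [smul_add, map_add, map_add, hx, hy, smul_add]

end Linearity

section LieRinehart

variable {R : Type*} [CommRing R] [Algebra R A] [Module R L] {an : L → A → A}
  {Φ : A' ⊗[A] L →+ A' ⊗[A] L →+ A' ⊗[A] L}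

theorem tmulBracket_balanced_right (h : IsLR R A L (· • ·) br an)
    (hder : ∀ (x : L) (u v : A'), ω x (u * v) = ω x u * v + u * ω x v)
    (hequiv : ∀ (x : L) (a : A), ω x (algebraMap A A' a) = algebraMap A A' (an x a))
    (hA : ∀ (a : A) (x : L) (u : A'), ω (a • x) u = algebraMap A A' a * ω x u)
    (u : A') (α : L) (a : A) (v : A') (β : L) :
    tmulBracket A br ω u α (a • v) β = tmulBracket A br ω u α v (a • β) := by
  simp only [tmulBracket, h.br_smul_right, hA, Algebra.smul_def, hder, hequiv, tmul_add,
    tmul_smul, smul_tmul', mul_add, add_tmul]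
  ring_nf
  abel

theorem tmulBracket_balanced_left (h : IsLR R A L (· • ·) br an)
    (hder : ∀ (x : L) (u v : A'), ω x (u * v) = ω x u * v + u * ω x v)
    (hequiv : ∀ (x : L) (a : A), ω x (algebraMap A A' a) = algebraMap A A' (an x a))
    (hA : ∀ (a : A) (x : L) (u : A'), ω (a • x) u = algebraMap A A' a * ω x u)
    (a : A) (u : A') (α : L) (v : A') (β : L) :
    tmulBracket A br ω (a • u) α v β = tmulBracket A br ω u (a • α) v β := by
  simp only [tmulBracket, h.br_smul_left, hA, Algebra.smul_def, hder, hequiv, tmul_sub,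
    tmul_smul, smul_tmul', mul_add, add_tmul]
  ring_nf
  abel

theorem tmulBracket_swap (h : IsLR R A L (· • ·) br an) (u : A') (α : L) (v : A') (β : L) :
    tmulBracket A br ω v β u α = -tmulBracket A br ω u α v β := by
  rw [tmulBracket, tmulBracket, h.br_swap α β, tmul_neg, mul_comm v u]
  abel

theorem tmulBracket_self (h : IsLR R A L (· • ·) br an) (u : A') (α : L) :
    tmulBracket A br ω u α u α = 0 := by
  rw [tmulBracket, h.br_self, tmul_zero, zero_sub, neg_add_cancel]

theorem map_swap_of_tmulBracket (h : IsLR R A L (· • ·) br an)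
    (hΦ : ∀ u α v β, Φ (u ⊗ₜ α) (v ⊗ₜ β) = tmulBracket A br ω u α v β) (z w : A' ⊗[A] L) :
    Φ w z = -Φ z w := by
  induction z, w using TensorProduct.induction_on₂ with
  | tmul u α v β => rw [hΦ, hΦ, tmulBracket_swap h]
  | add_left x y w hx hy => simp only [map_add, AddMonoidHom.add_apply, hx, hy, neg_add]
  | add_right z x y hx hy => simp only [map_add, AddMonoidHom.add_apply, hx, hy, neg_add]

theorem map_self_of_tmulBracket (h : IsLR R A L (· • ·) br an)
    (hΦ : ∀ u α v β, Φ (u ⊗ₜ α) (v ⊗ₜ β) = tmulBracket A br ω u α v β) (z : A' ⊗[A] L) :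
    Φ z z = 0 := by
  induction z using TensorProduct.induction_on with
  | zero => simp only [map_zero]
  | tmul u α => rw [hΦ, tmulBracket_self h]
  | add x y hx hy =>
    simp only [map_add, AddMonoidHom.add_apply, hx, hy]
    rw [map_swap_of_tmulBracket h hΦ x y]
    abel

theorem jacobi_tmul_of_tmulBracket (h : IsLR R A L (· • ·) br an)
    (hder : ∀ (x : L) (u v : A'), ω x (u * v) = ω x u * v + u * ω x v)
    (hlie : ∀ (x y : L) (u : A'), ω (br x y) u = ω x (ω y u) - ω y (ω x u))
    (hΦ : ∀ u α v β, Φ (u ⊗ₜ α) (v ⊗ₜ β) = tmulBracket A br ω u α v β)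
    (u : A') (α : L) (v : A') (β : L) (w : A') (γ : L) :
    Φ (u ⊗ₜ α) (Φ (v ⊗ₜ β) (w ⊗ₜ γ)) =
      Φ (Φ (u ⊗ₜ α) (v ⊗ₜ β)) (w ⊗ₜ γ) + Φ (v ⊗ₜ β) (Φ (u ⊗ₜ α) (w ⊗ₜ γ)) := by
  simp only [hΦ, tmulBracket, map_add, map_sub, AddMonoidHom.add_apply, AddMonoidHom.sub_apply]
  simp only [hlie, hder, mul_add, mul_sub, add_tmul, sub_tmul]
  simp only [h.leibniz_br α β γ, h.br_swap α β, tmul_add, tmul_neg]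
  ring_nf
  abel

theorem jacobi_of_tmulBracket (h : IsLR R A L (· • ·) br an)
    (hder : ∀ (x : L) (u v : A'), ω x (u * v) = ω x u * v + u * ω x v)
    (hlie : ∀ (x y : L) (u : A'), ω (br x y) u = ω x (ω y u) - ω y (ω x u))
    (hΦ : ∀ u α v β, Φ (u ⊗ₜ α) (v ⊗ₜ β) = tmulBracket A br ω u α v β)
    (z w t : A' ⊗[A] L) : Φ z (Φ w t) = Φ (Φ z w) t + Φ w (Φ z t) := by
  induction z, w using TensorProduct.induction_on₂ with
  | tmul u α v β =>
    induction t using TensorProduct.induction_on with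
    | zero => simp only [map_zero, add_zero]
    | tmul w γ => exact jacobi_tmul_of_tmulBracket h hder hlie hΦ u α v β w γ
    | add x y hx hy => rw [map_add, map_add, map_add, map_add, map_add, hx, hy]; abel
  | add_left x y w hx hy =>
    simp only [map_add, AddMonoidHom.add_apply, hx, hy]
    abel
  | add_right z x y hx hy =>
    simp only [map_add, AddMonoidHom.add_apply, hx, hy]
    abel

variable [Algebra R A']

theorem exists_addMonoidHom_tmulBracket (h : IsLR R A L (· • ·) br an)
    (hlin : ∀ x : L, IsLinearMap R (ω x)) (hlinx : ∀ u : A', IsLinearMap R fun x : L => ω x u)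
    (hder : ∀ (x : L) (u v : A'), ω x (u * v) = ω x u * v + u * ω x v)
    (hequiv : ∀ (x : L) (a : A), ω x (algebraMap A A' a) = algebraMap A A' (an x a))
    (hA : ∀ (a : A) (x : L) (u : A'), ω (a • x) u = algebraMap A A' a * ω x u) :
    ∃ Φ : A' ⊗[A] L →+ A' ⊗[A] L →+ A' ⊗[A] L,
      ∀ u α v β, Φ (u ⊗ₜ α) (v ⊗ₜ β) = tmulBracket A br ω u α v β := by
  have add_u : ∀ u u' α v β, tmulBracket A br ω (u + u') α v β =
      tmulBracket A br ω u α v β + tmulBracket A br ω u' α v β := fun u u' α v β => by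
    simp only [tmulBracket, (hlin _).map_add, add_mul, mul_add, add_tmul]
    abel
  have add_α : ∀ u α α' v β, tmulBracket A br ω u (α + α') v β =
      tmulBracket A br ω u α v β + tmulBracket A br ω u α' v β := fun u α α' v β => by
    simp only [tmulBracket, h.br_add_left, (hlinx _).map_add, mul_add, add_tmul, tmul_add]
    abel
  have add_v : ∀ u α v v' β, tmulBracket A br ω u α (v + v') β =
      tmulBracket A br ω u α v β + tmulBracket A br ω u α v' β := fun u α v v' β => by
    simp only [tmulBracket, (hlin _).map_add, add_mul, mul_add, add_tmul]
    abel
  have add_β : ∀ u α v β β', tmulBracket A br ω u α v (β + β') =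
      tmulBracket A br ω u α v β + tmulBracket A br ω u α v β' := fun u α v β β' => by
    simp only [tmulBracket, h.br_add_right, (hlinx _).map_add, mul_add, add_tmul, tmul_add]
    abel
  choose f hf using fun u α => TensorProduct.exists_addMonoidHom_tmul_eq
    (tmulBracket A br ω u α) (add_v u α) (add_β u α)
    (tmulBracket_balanced_right h hder hequiv hA u α)
  obtain ⟨Φ, hΦ⟩ := TensorProduct.exists_addMonoidHom_tmul_eq f
    (fun u u' α => TensorProduct.addMonoidHom_ext fun v β => by
      rw [AddMonoidHom.add_apply, hf, hf, hf, add_u])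
    (fun u α α' => TensorProduct.addMonoidHom_ext fun v β => by
      rw [AddMonoidHom.add_apply, hf, hf, hf, add_α])
    (fun a u α => TensorProduct.addMonoidHom_ext fun v β => by
      rw [hf, hf, tmulBracket_balanced_left h hder hequiv hA])
  exact ⟨Φ, fun u α v β => by rw [hΦ, hf]⟩

end LieRinehart

end Bracket

theorem stmt2_general (R : Type u) [CommRing R] (A : Type v) [CommRing A] [Algebra R A]
    (A' : Type v) [CommRing A'] [Algebra R A'] [Algebra A A']
    [SMulCommClass A R A']
    (L : Type v) [AddCommGroup L] [Module R L] [Module A L]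
    (br : L → L → L) (an : L → A → A)
    (h : IsLR R A L (fun a x => a • x) br an)
    (ω' : L → A' → A')
    (hlin : ∀ x : L, IsLinearMap R (ω' x))
    (hlinx : ∀ u : A', IsLinearMap R fun x : L => ω' x u)
    (hder : ∀ (x : L) (u v : A'), ω' x (u * v) = ω' x u * v + u * ω' x v)
    (hlie : ∀ (x y : L) (u : A'),
      ω' (br x y) u = ω' x (ω' y u) - ω' y (ω' x u))
    (hequiv : ∀ (x : L) (a : A),
      ω' x (algebraMap A A' a) = algebraMap A A' (an x a))
    (hA : ∀ (a : A) (x : L) (u : A'),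
      ω' (a • x) u = algebraMap A A' a * ω' x u) :
    ∃ br' : (A' ⊗[A] L) → (A' ⊗[A] L) → (A' ⊗[A] L),
      (∀ z : A' ⊗[A] L, IsLinearMap R (br' z)) ∧
      (∀ z : A' ⊗[A] L, IsLinearMap R fun w : A' ⊗[A] L => br' w z) ∧
      (∀ z : A' ⊗[A] L, br' z z = 0) ∧
      (∀ z w t : A' ⊗[A] L,
        br' z (br' w t) = br' (br' z w) t + br' w (br' z t)) ∧
      (∀ (u v : A') (α β : L),
        br' (u ⊗ₜ[A] α) (v ⊗ₜ[A] β) =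
          (u * v) ⊗ₜ[A] br α β - (v * ω' β u) ⊗ₜ[A] α + (u * ω' α v) ⊗ₜ[A] β) := by
  obtain ⟨Φ, hΦ⟩ := exists_addMonoidHom_tmulBracket h hlin hlinx hder hequiv hA
  exact ⟨fun z w => Φ z w,
    fun z => ⟨(Φ z).map_add, fun r w => map_smul_right_of_tmulBracket hlin hΦ r z w⟩,
    fun z => ⟨fun w w' => by simp only [map_add, AddMonoidHom.add_apply],
      fun r w => map_smul_left_of_tmulBracket hlin hΦ r w z⟩,
    map_self_of_tmulBracket h hΦ, jacobi_of_tmulBracket h hder hlie hΦ,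
    fun u v α β => hΦ u α v β⟩

/-- given a Lie-Rinehart algebra `(A, L)`, an algebra morphism
`φ = algebraMap A A'`, and an `A`-linear, `φ`-equivariant action `ω̃` of the
`R`-Lie algebra `L` on `A'` by derivations, the pairing
`u⊗α ⊗ v⊗β ↦ uv⊗[α,β] - (v·β(u))⊗α + (u·α(v))⊗β` descends to a well-defined
`R`-Lie algebra bracket on `L' = A' ⊗[A] L`. -/
theorem stmt2 (R : Type u) [CommRing R] (A : Type v) [CommRing A] [Algebra R A]
    (A' : Type v) [CommRing A'] [Algebra R A'] [Algebra A A'] [IsScalarTower R A A']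
    [SMulCommClass A R A']
    (L : Type v) [AddCommGroup L] [Module R L] [Module A L] [IsScalarTower R A L]
    (br : L → L → L) (an : L → A → A)
    (h : IsLR R A L (fun a x => a • x) br an)
    (ω' : L → A' → A')
    (hlin : ∀ x : L, IsLinearMap R (ω' x))
    (hlinx : ∀ u : A', IsLinearMap R fun x : L => ω' x u)
    (hder : ∀ (x : L) (u v : A'), ω' x (u * v) = ω' x u * v + u * ω' x v)
    (hlie : ∀ (x y : L) (u : A'),
      ω' (br x y) u = ω' x (ω' y u) - ω' y (ω' x u))
    (hequiv : ∀ (x : L) (a : A),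
      ω' x (algebraMap A A' a) = algebraMap A A' (an x a))
    (hA : ∀ (a : A) (x : L) (u : A'),
      ω' (a • x) u = algebraMap A A' a * ω' x u) :
    ∃ br' : (A' ⊗[A] L) → (A' ⊗[A] L) → (A' ⊗[A] L),
      (∀ z : A' ⊗[A] L, IsLinearMap R (br' z)) ∧
      (∀ z : A' ⊗[A] L, IsLinearMap R fun w : A' ⊗[A] L => br' w z) ∧
      (∀ z : A' ⊗[A] L, br' z z = 0) ∧
      (∀ z w t : A' ⊗[A] L,
        br' z (br' w t) = br' (br' z w) t + br' w (br' z t)) ∧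
      (∀ (u v : A') (α β : L),
        br' (u ⊗ₜ[A] α) (v ⊗ₜ[A] β) =
          (u * v) ⊗ₜ[A] br α β - (v * ω' β u) ⊗ₜ[A] α + (u * ω' α v) ⊗ₜ[A] β) :=
  stmt2_general R A A' L br an h ω' hlin hlinx hder hlie hequiv hA
end

section
/- Under the hypotheses of the induced-structure construction (Proposition on induced Lie-Rinehart structures), the pairing $A'\otimes_R L\otimes_R A'\to A'$, $u\otimes\alpha\otimes v\mapsto u\cdot\alpha(v)$, descends to an action $\omega'\colon L'=A'\otimes_A L\to\mathrm{Der}(A')$ of $L'$ on $A'$ by derivations, and together with the induced bracket it endows $L'$ with an $(R,A')$-Lie algebra structure such that $(\varphi,\varphi\otimes\mathrm{Id})\colon(A,L)\to(A',L')$ is a morphism of Lie-Rinehart algebras. -/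
open TensorProduct

universe u v w x y

/-!
The anchor is the `A'`-linear extension `u ⊗ α ↦ u • ω' α` of the action, and the bracket is
`[u ⊗ α, w] = u • (α · w) - (anchor w u) ⊗ α`, where `α · (v ⊗ β) = v ⊗ [α, β] + ω' α v ⊗ β` is
the natural action of `L` on `A' ⊗[A] L`. Both are well defined on `A' ⊗[A] L` because `φ` is
`L`-equivariant and `L` satisfies the Leibniz rule. The Leibniz rule for the new bracket and the
compatibility of the anchor with brackets are checked on pure tensors. These two facts make the
Jacobiator `A'`-trilinear, so it suffices to evaluate it on elements `1 ⊗ α`, where it is the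
Jacobiator of `L`.
-/

namespace IsLR

variable {R A L : Type*} [CommRing R] [CommRing A] [Algebra R A] [AddCommGroup L] [Module R L]
  [Module A L] {br : L → L → L} {an : L → A → A} (h : IsLR R A L (fun a x => a • x) br an)
include h

theorem bracket_add_right (x y z : L) : br x (y + z) = br x y + br x z :=
  (h.2.2.2.2.2.1 x).map_add y z

theorem bracket_add_left (x y z : L) : br (x + y) z = br x z + br y z :=
  (h.2.2.2.2.2.2.1 z).map_add x y

theorem bracket_self (x : L) : br x x = 0 :=
  h.2.2.2.2.2.2.2.1 x

theorem jacobi (x y z : L) : br x (br y z) = br (br x y) z + br y (br x z) :=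
  h.2.2.2.2.2.2.2.2.1 x y z

theorem bracket_smul_right (x : L) (a : A) (y : L) : br x (a • y) = a • br x y + an x a • y :=
  h.2.2.2.2.2.2.2.2.2.2.2.2.2.2 x a y

theorem bracket_swap (x y : L) : br x y = -br y x := by
  have hxy := h.bracket_self (x + y)
  rw [h.bracket_add_left, h.bracket_add_right, h.bracket_add_right, h.bracket_self,
    h.bracket_self, zero_add, add_zero] at hxy
  exact eq_neg_of_add_eq_zero_left hxy

theorem bracket_smul_left (a : A) (x y : L) : br (a • x) y = a • br x y - an y a • x := by
  rw [h.bracket_swap, h.bracket_smul_right, h.bracket_swap y x, smul_neg]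
  abel

end IsLR

theorem TensorProduct.addMonoidHom_ext_s3 {R M N P : Type*} [CommSemiring R] [AddCommMonoid M]
    [AddCommMonoid N] [Module R M] [Module R N] [AddCommMonoid P] {f g : M ⊗[R] N →+ P}
    (h : ∀ m n, f (m ⊗ₜ n) = g (m ⊗ₜ n)) : f = g := by
  ext z
  induction z using TensorProduct.induction_on with
  | zero => simp only [map_zero]
  | tmul m n => exact h m n
  | add x y hx hy => simp only [map_add, hx, hy]

theorem Derivation.map_algebra_smul {R A B M : Type*} [CommSemiring R] [CommSemiring A]
    [CommSemiring B] [Algebra R B] [Algebra A B] [AddCommMonoid M] [Module B M] [Module R M]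
    [IsScalarTower R B M] [Module A M] [IsScalarTower A B M] (D : Derivation R B M) (a : A)
    (u : B) : D (a • u) = a • D u + u • D (algebraMap A B a) := by
  rw [Algebra.smul_def, D.leibniz, algebraMap_smul, add_comm]

section Jacobiator

variable {S M : Type*} [CommRing S] [AddCommGroup M] [Module S M]

def jacobiator (br : M →+ M →+ M) (p q s : M) : M :=
  br p (br q s) - br (br p q) s - br q (br p s)

variable {br : M →+ M →+ M}

theorem jacobiator_add_right (p q s s' : M) :
    jacobiator br p q (s + s') = jacobiator br p q s + jacobiator br p q s' := by
  simp only [jacobiator, map_add]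
  abel

theorem jacobiator_rotate (hskew : ∀ p q, br p q = -br q p) (p q s : M) :
    jacobiator br p q s = jacobiator br q s p := by
  simp only [jacobiator]
  rw [hskew (br p q) s, hskew p s, hskew (br q s) p, hskew q p, map_neg, map_neg]
  abel

theorem jacobiator_smul_right {an : M → S → S}
    (hleib : ∀ p (c : S) q, br p (c • q) = c • br p q + an p c • q)
    (hanchor : ∀ p q c, an (br p q) c = an p (an q c) - an q (an p c)) (p q s : M) (c : S) :
    jacobiator br p q (c • s) = c • jacobiator br p q s := by
  simp only [jacobiator, hleib, map_add, hanchor]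
  module

end Jacobiator

section InducedStructure

variable {R A A' L : Type*} [CommRing R] [CommRing A] [Algebra R A] [CommRing A'] [Algebra R A']
  [Algebra A A'] [IsScalarTower R A A'] [AddCommGroup L] [Module A L]

def actionDerivation [Module R L] (ω : L → A' → A') (hlin : ∀ x : L, IsLinearMap R (ω x))
    (hlinx : ∀ u : A', IsLinearMap R fun x : L => ω x u)
    (hder : ∀ (x : L) (u v : A'), ω x (u * v) = ω x u * v + u * ω x v)
    (hA : ∀ (a : A) (x : L) (u : A'), ω (a • x) u = algebraMap A A' a * ω x u) :
    L →ₗ[A] Derivation R A' A' where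
  toFun x := Derivation.mk' (IsLinearMap.mk' (ω x) (hlin x)) fun u v => by
    simp only [IsLinearMap.mk'_apply, hder, smul_eq_mul]
    ring
  map_add' x y := by
    ext u
    exact (hlinx u).map_add x y
  map_smul' a x := by
    ext u
    exact (hA a x u).trans (Algebra.smul_def a _).symm

variable (ρ : L →ₗ[A] Derivation R A' A')

abbrev inducedAnchor : A' ⊗[A] L →ₗ[A'] Derivation R A' A' :=
  ρ.liftBaseChange A'

theorem inducedAnchor_tmul (u : A') (x : L) (v : A') :
    inducedAnchor ρ (u ⊗ₜ x) v = u * ρ x v :=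
  rfl

variable {br : L → L → L} {an : L → A → A}
  (hρ : ∀ (x : L) (a : A), ρ x (algebraMap A A' a) = algebraMap A A' (an x a))

include hρ in
theorem map_smul_of_equivariant (x : L) (a : A) (u : A') :
    ρ x (a • u) = a • ρ x u + an x a • u := by
  rw [(ρ x).map_algebra_smul, hρ, smul_eq_mul, mul_comm, ← Algebra.smul_def]

variable [Module R L] (hL : IsLR R A L (fun a x => a • x) br an)

def tensorAction (x : L) : A' ⊗[A] L →+ A' ⊗[A] L :=
  liftAddHom
    (AddMonoidHom.mk'
      (fun u => AddMonoidHom.mk' (fun y => u ⊗ₜ br x y + ρ x u ⊗ₜ y) fun y z => by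
        rw [hL.bracket_add_right, tmul_add, tmul_add]
        abel)
      fun u v => by
        ext y
        simp only [AddMonoidHom.mk'_apply, AddMonoidHom.add_apply, map_add, add_tmul]
        abel)
    fun a u y => by
      simp only [AddMonoidHom.mk'_apply, map_smul_of_equivariant ρ hρ, hL.bracket_smul_right,
        tmul_add, add_tmul, ← smul_tmul]
      abel

@[simp]
theorem tensorAction_tmul (x : L) (u : A') (y : L) :
    tensorAction ρ hρ hL x (u ⊗ₜ y) = u ⊗ₜ br x y + ρ x u ⊗ₜ y :=
  rfl

theorem tensorAction_add (x y : L) :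
    tensorAction ρ hρ hL (x + y) = tensorAction ρ hρ hL x + tensorAction ρ hρ hL y :=
  addMonoidHom_ext_s3 fun u z => by
    simp only [tensorAction_tmul, AddMonoidHom.add_apply, hL.bracket_add_left, map_add,
      Derivation.add_apply, tmul_add, add_tmul]
    abel

theorem tensorAction_smul_left (a : A) (x : L) (w : A' ⊗[A] L) :
    tensorAction ρ hρ hL (a • x) w =
      a • tensorAction ρ hρ hL x w - inducedAnchor ρ w (algebraMap A A' a) ⊗ₜ x := by
  induction w using TensorProduct.induction_on with
  | zero => simp
  | add w w' hw hw' =>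
    rw [map_add, hw, hw', map_add, smul_add, map_add, Derivation.add_apply, add_tmul]
    abel
  | tmul v y =>
    simp only [tensorAction_tmul, hL.bracket_smul_left, inducedAnchor_tmul, hρ, map_smul,
      Derivation.smul_apply, tmul_sub, smul_add, smul_tmul', ← smul_tmul]
    rw [mul_comm v, ← Algebra.smul_def]
    abel

theorem tensorAction_smul_right (x : L) (c : A') (w : A' ⊗[A] L) :
    tensorAction ρ hρ hL x (c • w) = c • tensorAction ρ hρ hL x w + ρ x c • w := by
  induction w using TensorProduct.induction_on with
  | zero => simp
  | add w w' hw hw' =>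
    rw [smul_add, map_add, hw, hw', map_add, smul_add, smul_add]
    abel
  | tmul v y =>
    simp only [smul_tmul', tensorAction_tmul, Derivation.leibniz, smul_add, add_tmul, smul_eq_mul]
    ring_nf
    abel

theorem inducedAnchor_tensorAction (hlie : ∀ x y : L, ρ (br x y) = ⁅ρ x, ρ y⁆) (x : L)
    (w : A' ⊗[A] L) : inducedAnchor ρ (tensorAction ρ hρ hL x w) = ⁅ρ x, inducedAnchor ρ w⁆ := by
  induction w using TensorProduct.induction_on with
  | zero => simp
  | add w w' hw hw' => rw [map_add, map_add, hw, hw', map_add, lie_add]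
  | tmul v y =>
    ext t
    simp only [tensorAction_tmul, map_add, Derivation.add_apply, inducedAnchor_tmul, hlie,
      Derivation.commutator_apply, Derivation.leibniz, smul_eq_mul]
    ring

def inducedBracket : A' ⊗[A] L →+ A' ⊗[A] L →+ A' ⊗[A] L :=
  liftAddHom
    (AddMonoidHom.mk'
      (fun u => AddMonoidHom.mk'
        (fun x => u • tensorAction ρ hρ hL x -
          AddMonoidHom.mk' (fun w => inducedAnchor ρ w u ⊗ₜ x) fun w w' => by
            rw [map_add, Derivation.add_apply, add_tmul])
        fun x y => by
          ext w
          simp only [tensorAction_add, AddMonoidHom.sub_apply, AddMonoidHom.add_apply,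
            AddMonoidHom.smul_apply, AddMonoidHom.mk'_apply, smul_add, tmul_add]
          abel)
      fun u v => by
        ext x w
        simp only [AddMonoidHom.sub_apply, AddMonoidHom.add_apply, AddMonoidHom.smul_apply,
          AddMonoidHom.mk'_apply, add_smul, map_add, add_tmul]
        abel)
    fun a u x => by
      ext w
      simp only [AddMonoidHom.sub_apply, AddMonoidHom.smul_apply, AddMonoidHom.mk'_apply,
        tensorAction_smul_left, Derivation.map_algebra_smul, add_tmul, smul_sub, tmul_smul,
        smul_tmul', smul_eq_mul, smul_assoc]
      rw [smul_comm a u]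
      abel

theorem inducedBracket_tmul_left (u : A') (x : L) (w : A' ⊗[A] L) :
    inducedBracket ρ hρ hL (u ⊗ₜ x) w = u • tensorAction ρ hρ hL x w - inducedAnchor ρ w u ⊗ₜ x :=
  rfl

theorem inducedBracket_tmul (u v : A') (x y : L) :
    inducedBracket ρ hρ hL (u ⊗ₜ x) (v ⊗ₜ y) =
      (u * v) ⊗ₜ br x y - (v * ρ y u) ⊗ₜ x + (u * ρ x v) ⊗ₜ y := by
  rw [inducedBracket_tmul_left, tensorAction_tmul, inducedAnchor_tmul, smul_add, smul_tmul',
    smul_tmul', smul_eq_mul, smul_eq_mul]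
  abel

theorem inducedBracket_smul_right (z : A' ⊗[A] L) (c : A') (w : A' ⊗[A] L) :
    inducedBracket ρ hρ hL z (c • w) =
      c • inducedBracket ρ hρ hL z w + inducedAnchor ρ z c • w := by
  induction z using TensorProduct.induction_on with
  | zero => simp
  | add z z' hz hz' =>
    rw [map_add, AddMonoidHom.add_apply, AddMonoidHom.add_apply, hz, hz', map_add,
      Derivation.add_apply, add_smul, smul_add]
    abel
  | tmul u x =>
    rw [inducedBracket_tmul_left, inducedBracket_tmul_left, tensorAction_smul_right, map_smul,
      Derivation.smul_apply, inducedAnchor_tmul, ← smul_tmul']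
    module

theorem inducedAnchor_inducedBracket (hlie : ∀ x y : L, ρ (br x y) = ⁅ρ x, ρ y⁆)
    (z w : A' ⊗[A] L) :
    inducedAnchor ρ (inducedBracket ρ hρ hL z w) = ⁅inducedAnchor ρ z, inducedAnchor ρ w⁆ := by
  induction z using TensorProduct.induction_on with
  | zero => simp
  | add z z' hz hz' => rw [map_add, AddMonoidHom.add_apply, map_add, hz, hz', map_add, add_lie]
  | tmul u x =>
    ext t
    rw [inducedBracket_tmul_left, map_sub, map_smul, inducedAnchor_tensorAction ρ hρ hL hlie]
    simp only [LinearMap.liftBaseChange_tmul, Derivation.sub_apply, Derivation.smul_apply,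
      Derivation.commutator_apply, Derivation.leibniz, smul_eq_mul]
    ring

theorem inducedBracket_swap (z w : A' ⊗[A] L) :
    inducedBracket ρ hρ hL z w = -inducedBracket ρ hρ hL w z := by
  induction z using TensorProduct.induction_on with
  | zero => simp
  | add z z' hz hz' => rw [map_add, AddMonoidHom.add_apply, hz, hz', map_add, neg_add]
  | tmul u x =>
    induction w using TensorProduct.induction_on with
    | zero => simp
    | add w w' hw hw' => rw [map_add, hw, hw', map_add, AddMonoidHom.add_apply, neg_add]
    | tmul v y =>
      rw [inducedBracket_tmul, inducedBracket_tmul, hL.bracket_swap y x, tmul_neg, mul_comm v u]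
      abel

theorem inducedBracket_self (z : A' ⊗[A] L) : inducedBracket ρ hρ hL z z = 0 := by
  induction z using TensorProduct.induction_on with
  | zero => simp
  | add z z' hz hz' =>
    simp only [map_add, AddMonoidHom.add_apply, hz, hz']
    rw [inducedBracket_swap ρ hρ hL z' z]
    abel
  | tmul u x => rw [inducedBracket_tmul, hL.bracket_self, tmul_zero, zero_sub, neg_add_cancel]

theorem inducedBracket_smul_right_of_tower (z : A' ⊗[A] L) (r : R) (w : A' ⊗[A] L) :
    inducedBracket ρ hρ hL z (r • w) = r • inducedBracket ρ hρ hL z w := by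
  rw [← algebraMap_smul A' r w, inducedBracket_smul_right, Derivation.map_algebraMap, zero_smul,
    add_zero, algebraMap_smul]

theorem inducedBracket_one_tmul (x y : L) :
    inducedBracket ρ hρ hL (1 ⊗ₜ x) (1 ⊗ₜ y) = 1 ⊗ₜ br x y := by
  simp only [inducedBracket_tmul, Derivation.map_one_eq_zero, mul_zero, zero_tmul, sub_zero,
    add_zero, mul_one]

theorem inducedBracket_jacobiator (hlie : ∀ x y : L, ρ (br x y) = ⁅ρ x, ρ y⁆)
    (p q s : A' ⊗[A] L) : jacobiator (inducedBracket ρ hρ hL) p q s = 0 := by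
  have smul_right := jacobiator_smul_right (inducedBracket_smul_right ρ hρ hL)
    fun p q c => by rw [inducedAnchor_inducedBracket ρ hρ hL hlie, Derivation.commutator_apply]
  have rotate := jacobiator_rotate (inducedBracket_swap ρ hρ hL)
  have of_tmul : ∀ p q, (∀ u x, jacobiator (inducedBracket ρ hρ hL) p q (u ⊗ₜ x) = 0) →
      ∀ s, jacobiator (inducedBracket ρ hρ hL) p q s = 0 := fun p q h s => by
    induction s using TensorProduct.induction_on with
    | zero => simp [jacobiator]
    | tmul u x => exact h u x
    | add s s' hs hs' => rw [jacobiator_add_right, hs, hs', add_zero]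
  have tmul_eq (u : A') (x : L) : u ⊗ₜ[A] x = u • (1 : A') ⊗ₜ x := by
    rw [smul_tmul', smul_eq_mul, mul_one]
  -- reduce each slot to pure tensors, rotating the slot just reduced out of the last position
  refine of_tmul p q (fun w z => ?_) s
  rw [rotate]
  refine of_tmul _ _ (fun u x => ?_) p
  rw [rotate]
  refine of_tmul _ _ (fun v y => ?_) q
  rw [tmul_eq v, smul_right, rotate, tmul_eq w, smul_right, rotate, tmul_eq u, smul_right]
  simp only [jacobiator, inducedBracket_one_tmul, ← tmul_sub]
  rw [hL.jacobi y z x, sub_sub, sub_self, tmul_zero, smul_zero, smul_zero, smul_zero]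

theorem isLR_inducedBracket (hlie : ∀ x y : L, ρ (br x y) = ⁅ρ x, ρ y⁆) :
    IsLR R A' (A' ⊗[A] L) (fun c z => c • z) (fun z w => inducedBracket ρ hρ hL z w)
      (fun z t => inducedAnchor ρ z t) := by
  refine ⟨fun c => ⟨smul_add c, fun r z => smul_comm c r z⟩, one_smul A', mul_smul, add_smul,
    smul_assoc, fun z => ⟨map_add _, inducedBracket_smul_right_of_tower ρ hρ hL z⟩,
    fun w => ⟨fun z z' => by simp only [map_add, AddMonoidHom.add_apply], fun r z => ?_⟩,
    inducedBracket_self ρ hρ hL, fun p q s => ?_,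
    fun z => ⟨map_add _, (inducedAnchor ρ z).map_smul⟩,
    fun t => ⟨fun z z' => by simp only [map_add, Derivation.add_apply], fun r z => ?_⟩,
    fun z t t' => ?_, fun p q t => ?_, fun c z t => ?_,
    fun p c q => inducedBracket_smul_right ρ hρ hL p c q⟩
  all_goals dsimp only
  · rw [inducedBracket_swap, inducedBracket_smul_right_of_tower, inducedBracket_swap ρ hρ hL w,
      smul_neg, neg_neg]
  · have hJ := inducedBracket_jacobiator ρ hρ hL hlie p q s
    rwa [jacobiator, sub_sub, sub_eq_zero] at hJ
  · rw [LinearMap.map_smul_of_tower, Derivation.smul_apply]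
  · rw [Derivation.leibniz, smul_eq_mul, smul_eq_mul]
    ring
  · rw [inducedAnchor_inducedBracket ρ hρ hL hlie, Derivation.commutator_apply]
  · rw [map_smul, Derivation.smul_apply, smul_eq_mul]

theorem isLRHom_baseChange [IsScalarTower R A L] :
    IsLRHom R (fun a x => a • x) br an (fun c z => c • z)
      (fun z w => inducedBracket ρ hρ hL z w) (fun z t => inducedAnchor ρ z t)
      (algebraMap A A') (fun x : L => (1 : A') ⊗ₜ[A] x) :=
  ⟨⟨(IsScalarTower.toAlgHom R A A').toLinearMap.isLinear, map_one _, map_mul _⟩,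
    ((TensorProduct.mk A A' L 1).restrictScalars R).isLinear,
    fun x y => (inducedBracket_one_tmul ρ hρ hL x y).symm,
    fun a x => by dsimp only; rw [tmul_smul, algebraMap_smul],
    fun x a => by dsimp only; rw [inducedAnchor_tmul, one_mul, hρ]⟩

end InducedStructure

/-- under the hypotheses of the induced-structure construction,
the pairing `u⊗α⊗v ↦ u·α(v)` descends to an action of `L' = A' ⊗[A] L` on `A'`
by derivations which, together with the induced bracket, makes `L'` an
`(R,A')`-Lie algebra such that `(φ, φ ⊗ Id)` is a morphism of Lie-Rinehart
algebras. -/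
theorem stmt3 (R : Type u) [CommRing R] (A : Type v) [CommRing A] [Algebra R A]
    (A' : Type v) [CommRing A'] [Algebra R A'] [Algebra A A'] [IsScalarTower R A A']
    [SMulCommClass A R A']
    (L : Type v) [AddCommGroup L] [Module R L] [Module A L] [IsScalarTower R A L]
    (br : L → L → L) (an : L → A → A)
    (h : IsLR R A L (fun a x => a • x) br an)
    (ω' : L → A' → A')
    (hlin : ∀ x : L, IsLinearMap R (ω' x))
    (hlinx : ∀ u : A', IsLinearMap R fun x : L => ω' x u)
    (hder : ∀ (x : L) (u v : A'), ω' x (u * v) = ω' x u * v + u * ω' x v)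
    (hlie : ∀ (x y : L) (u : A'),
      ω' (br x y) u = ω' x (ω' y u) - ω' y (ω' x u))
    (hequiv : ∀ (x : L) (a : A),
      ω' x (algebraMap A A' a) = algebraMap A A' (an x a))
    (hA : ∀ (a : A) (x : L) (u : A'),
      ω' (a • x) u = algebraMap A A' a * ω' x u) :
    ∃ (br' : (A' ⊗[A] L) → (A' ⊗[A] L) → (A' ⊗[A] L))
      (an' : (A' ⊗[A] L) → A' → A'),
      (∀ (u v : A') (α β : L),
        br' (u ⊗ₜ[A] α) (v ⊗ₜ[A] β) =
          (u * v) ⊗ₜ[A] br α β - (v * ω' β u) ⊗ₜ[A] α + (u * ω' α v) ⊗ₜ[A] β) ∧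
      (∀ (u : A') (α : L) (v : A'), an' (u ⊗ₜ[A] α) v = u * ω' α v) ∧
      IsLR R A' (A' ⊗[A] L) (fun c z => c • z) br' an' ∧
      IsLRHom R (fun a x => a • x) br an (fun c z => c • z) br' an'
        (algebraMap A A') (fun x : L => (1 : A') ⊗ₜ[A] x) := by
  set ρ := actionDerivation ω' hlin hlinx hder hA
  have hρ : ∀ (x : L) (a : A), ρ x (algebraMap A A' a) = algebraMap A A' (an x a) := hequiv
  have hρlie : ∀ x y : L, ρ (br x y) = ⁅ρ x, ρ y⁆ := fun x y => by
    ext u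
    rw [Derivation.commutator_apply]
    exact hlie x y u
  exact ⟨fun z w => inducedBracket ρ hρ h z w, fun z t => inducedAnchor ρ z t,
    inducedBracket_tmul ρ hρ h, inducedAnchor_tmul ρ, isLR_inducedBracket ρ hρ h hρlie,
    isLRHom_baseChange ρ hρ h⟩
end

section
/- In the crossed product $(R,A)$-Lie algebra $A\odot\mathfrak g$, the Jacobi identity holds: for all $a,b,c\in A$ and $x,y,z\in\mathfrak g$, $[[a\otimes x,b\otimes y],c\otimes z] + [[b\otimes y,c\otimes z],a\otimes x] + [[c\otimes z,a\otimes x],b\otimes y] = 0$. -/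
open TensorProduct

universe u v w x y

namespace CrossedProduct

variable {R : Type u} [CommRing R] {A : Type v} [CommRing A] [Algebra R A]
  {g : Type w} [LieRing g] [LieAlgebra R g] {ω : g → A → A}
  {br : A ⊗[R] g → A ⊗[R] g → A ⊗[R] g}

theorem bracket_bracket_tmul
    (hbr : ∀ z : A ⊗[R] g, IsLinearMap R fun w : A ⊗[R] g => br w z)
    (hform : ∀ (a b : A) (x y : g),
      br (a ⊗ₜ[R] x) (b ⊗ₜ[R] y) =
        (a * b) ⊗ₜ[R] ⁅x, y⁆ + (a * ω x b) ⊗ₜ[R] y - (b * ω y a) ⊗ₜ[R] x)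
    (a b c : A) (x y z : g) :
    br (br (a ⊗ₜ[R] x) (b ⊗ₜ[R] y)) (c ⊗ₜ[R] z) =
      (a * b * ω ⁅x, y⁆ c + a * ω x b * ω y c - b * ω y a * ω x c) ⊗ₜ[R] z
        - (c * ω z (a * ω x b)) ⊗ₜ[R] y
        + (c * ω z (b * ω y a)) ⊗ₜ[R] x
        - (c * ω z (a * b)) ⊗ₜ[R] ⁅x, y⁆
        + (a * c * ω x b) ⊗ₜ[R] ⁅y, z⁆
        + (b * c * ω y a) ⊗ₜ[R] ⁅z, x⁆
        - (a * b * c) ⊗ₜ[R] ⁅z, ⁅x, y⁆⁆ := by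
  rw [hform a b x y, (hbr _).map_sub, (hbr _).map_add, hform, hform, hform,
    ← lie_skew z ⁅x, y⁆, ← lie_skew z x]
  simp only [add_tmul, sub_tmul, tmul_neg]
  ring_nf
  abel

/-- The Jacobiator of the crossed product is that of `g` plus the curvature
`ω ⁅x, y⁆ - ⁅ω x, ω y⁆` of the action. -/
theorem jacobiator_tmul
    (hder : ∀ (x : g) (a b : A), ω x (a * b) = ω x a * b + a * ω x b)
    (hbr : ∀ z : A ⊗[R] g, IsLinearMap R fun w : A ⊗[R] g => br w z)
    (hform : ∀ (a b : A) (x y : g),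
      br (a ⊗ₜ[R] x) (b ⊗ₜ[R] y) =
        (a * b) ⊗ₜ[R] ⁅x, y⁆ + (a * ω x b) ⊗ₜ[R] y - (b * ω y a) ⊗ₜ[R] x)
    (a b c : A) (x y z : g) :
    br (br (a ⊗ₜ[R] x) (b ⊗ₜ[R] y)) (c ⊗ₜ[R] z) +
        br (br (b ⊗ₜ[R] y) (c ⊗ₜ[R] z)) (a ⊗ₜ[R] x) +
        br (br (c ⊗ₜ[R] z) (a ⊗ₜ[R] x)) (b ⊗ₜ[R] y) =
      (a * b * (ω ⁅x, y⁆ c - (ω x (ω y c) - ω y (ω x c)))) ⊗ₜ[R] z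
        + (b * c * (ω ⁅y, z⁆ a - (ω y (ω z a) - ω z (ω y a)))) ⊗ₜ[R] x
        + (c * a * (ω ⁅z, x⁆ b - (ω z (ω x b) - ω x (ω z b)))) ⊗ₜ[R] y
        - (a * b * c) ⊗ₜ[R] (⁅x, ⁅y, z⁆⁆ + ⁅y, ⁅z, x⁆⁆ + ⁅z, ⁅x, y⁆⁆) := by
  simp only [bracket_bracket_tmul hbr hform, hder, tmul_add, add_tmul, sub_tmul, mul_add, mul_sub]
  ring_nf
  abel

end CrossedProduct

theorem stmt5_general (R : Type u) [CommRing R] (A : Type v) [CommRing A] [Algebra R A]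
    (g : Type w) [LieRing g] [LieAlgebra R g]
    (ω : g → A → A)
    (hder : ∀ (x : g) (a b : A), ω x (a * b) = ω x a * b + a * ω x b)
    (hlie : ∀ (x y : g) (a : A), ω ⁅x, y⁆ a = ω x (ω y a) - ω y (ω x a))
    (br : A ⊗[R] g → A ⊗[R] g → A ⊗[R] g)
    (hbr : ∀ z : A ⊗[R] g, IsLinearMap R fun w : A ⊗[R] g => br w z)
    (hform : ∀ (a b : A) (x y : g),
      br (a ⊗ₜ[R] x) (b ⊗ₜ[R] y) =
        (a * b) ⊗ₜ[R] ⁅x, y⁆ + (a * ω x b) ⊗ₜ[R] y - (b * ω y a) ⊗ₜ[R] x) :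
    ∀ (a b c : A) (x y z : g),
      br (br (a ⊗ₜ[R] x) (b ⊗ₜ[R] y)) (c ⊗ₜ[R] z) +
        br (br (b ⊗ₜ[R] y) (c ⊗ₜ[R] z)) (a ⊗ₜ[R] x) +
        br (br (c ⊗ₜ[R] z) (a ⊗ₜ[R] x)) (b ⊗ₜ[R] y) = 0 := by
  intro a b c x y z
  simp [CrossedProduct.jacobiator_tmul hder hbr hform, hlie, lie_jacobi]

/-- the Jacobi identity holds for the crossed product bracket on
`A ⊗[R] 𝔤`. -/
theorem stmt5 (R : Type u) [CommRing R] (A : Type v) [CommRing A] [Algebra R A]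
    (g : Type w) [LieRing g] [LieAlgebra R g]
    (ω : g → A → A)
    (hω : ∀ x : g, IsLinearMap R (ω x))
    (hωx : ∀ a : A, IsLinearMap R fun x : g => ω x a)
    (hder : ∀ (x : g) (a b : A), ω x (a * b) = ω x a * b + a * ω x b)
    (hlie : ∀ (x y : g) (a : A), ω ⁅x, y⁆ a = ω x (ω y a) - ω y (ω x a))
    (br : A ⊗[R] g → A ⊗[R] g → A ⊗[R] g)
    (hbl : ∀ z : A ⊗[R] g, IsLinearMap R (br z))
    (hbr : ∀ z : A ⊗[R] g, IsLinearMap R fun w : A ⊗[R] g => br w z)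
    (hform : ∀ (a b : A) (x y : g),
      br (a ⊗ₜ[R] x) (b ⊗ₜ[R] y) =
        (a * b) ⊗ₜ[R] ⁅x, y⁆ + (a * ω x b) ⊗ₜ[R] y - (b * ω y a) ⊗ₜ[R] x) :
    ∀ (a b c : A) (x y z : g),
      br (br (a ⊗ₜ[R] x) (b ⊗ₜ[R] y)) (c ⊗ₜ[R] z) +
        br (br (b ⊗ₜ[R] y) (c ⊗ₜ[R] z)) (a ⊗ₜ[R] x) +
        br (br (c ⊗ₜ[R] z) (a ⊗ₜ[R] x)) (b ⊗ₜ[R] y) = 0 :=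
  stmt5_general R A g ω hder hlie br hbr hform
end

section
/- Let $(A,L)$ be a Lie-Rinehart algebra. The $R$-algebra $\mathrm U(A,L)\otimes\mathrm U(A,L)$, together with $\iota_A\otimes\iota_A\colon A\otimes A\to\mathrm U(A,L)\otimes\mathrm U(A,L)$ and $\iota_L\otimes\iota_A\oplus\iota_A\otimes\iota_L\colon L\otimes A\oplus A\otimes L\to\mathrm U(A,L)\otimes\mathrm U(A,L)$, satisfies the universal property of the universal algebra $\mathrm U(A\otimes A, L\otimes A\oplus A\otimes L)$; hence these algebras are canonically isomorphic. -/
/-!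
The relations for `(U ⊗ U, ιA ⊗ ιA, ιL ⊗ ιA ⊕ ιA ⊗ ιL)` are checked on pure tensors. For the
bracket it suffices to check them on the `A ⊗ A`-module generators `α ⊗ 1`, `1 ⊗ α`, because the
Leibniz rule propagates the relation; on generators it is the bracket relation of `U(A,L)` in one
factor, or the commutation of the two factors. For universality, a triple `(B, φA, φL)` for the
tensor square restricts along the two inclusions of `(A, L)` to triples for `(A, L)`, giving
algebra maps `f₁ f₂ : U → B`. The mixed anchors and brackets vanish, so `f₁` and `f₂` commute on
the generators of `U`, hence everywhere, and `u ⊗ v ↦ f₁ u * f₂ v` is the required map. It is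
unique since `U ⊗ U` is generated by the two copies of `U`.
-/

open TensorProduct

universe u v w x y

section IsLR

variable {R A L : Type*} [CommRing R] [CommRing A] [Algebra R A] [AddCommGroup L] [Module R L]
  {sm : A → L → L} {br : L → L → L} {an : L → A → A}

namespace IsLR

theorem one_sm (h : IsLR R A L sm br an) (x : L) : sm 1 x = x := h.2.1 x

theorem sm_add (h : IsLR R A L sm br an) (a : A) (x y : L) : sm a (x + y) = sm a x + sm a y :=
  (h.1 a).map_add x y

theorem sm_zero (h : IsLR R A L sm br an) (a : A) : sm a 0 = 0 := (h.1 a).map_zero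

theorem add_sm (h : IsLR R A L sm br an) (a b : A) (x : L) : sm (a + b) x = sm a x + sm b x :=
  h.2.2.2.1 a b x

theorem zero_sm (h : IsLR R A L sm br an) (x : L) : sm 0 x = 0 := by
  have e := h.add_sm 0 0 x
  rwa [add_zero, right_eq_add] at e

theorem br_add (h : IsLR R A L sm br an) (x y z : L) : br x (y + z) = br x y + br x z :=
  (h.2.2.2.2.2.1 x).map_add y z

theorem add_br (h : IsLR R A L sm br an) (x y z : L) : br (x + y) z = br x z + br y z :=
  (h.2.2.2.2.2.2.1 z).map_add x y

theorem zero_br (h : IsLR R A L sm br an) (y : L) : br 0 y = 0 := (h.2.2.2.2.2.2.1 y).map_zero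

theorem br_skew (h : IsLR R A L sm br an) (x y : L) : -br y x = br x y := by
  have e := h.2.2.2.2.2.2.2.1 (x + y)
  rw [h.add_br, h.br_add, h.br_add, h.2.2.2.2.2.2.2.1 x, h.2.2.2.2.2.2.2.1 y, zero_add,
    add_zero] at e
  exact neg_eq_of_add_eq_zero_left e

theorem br_sm_left (h : IsLR R A L sm br an) (a : A) (x y : L) :
    br (sm a x) y = sm a (br x y) - sm (an y a) x := by
  rw [← h.br_skew, h.2.2.2.2.2.2.2.2.2.2.2.2.2.2 y a x, ← h.br_skew y x, (h.1 a).map_neg]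
  abel

theorem an_add (h : IsLR R A L sm br an) (x : L) (a b : A) : an x (a + b) = an x a + an x b :=
  (h.2.2.2.2.2.2.2.2.2.1 x).map_add a b

theorem add_an (h : IsLR R A L sm br an) (x y : L) (a : A) : an (x + y) a = an x a + an y a :=
  (h.2.2.2.2.2.2.2.2.2.2.1 a).map_add x y

theorem an_zero (h : IsLR R A L sm br an) (x : L) : an x 0 = 0 :=
  (h.2.2.2.2.2.2.2.2.2.1 x).map_zero

theorem zero_an (h : IsLR R A L sm br an) (a : A) : an 0 a = 0 :=
  (h.2.2.2.2.2.2.2.2.2.2.1 a).map_zero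

theorem an_one (h : IsLR R A L sm br an) (x : L) : an x 1 = 0 := by
  have e := h.2.2.2.2.2.2.2.2.2.2.2.1 x 1 1
  rwa [mul_one, mul_one, one_mul, right_eq_add] at e

end IsLR

end IsLR

theorem AlgHom.isAlgHomFun {R A B : Type*} [CommRing R] [CommRing A] [Algebra R A] [Ring B]
    [Algebra R B] (f : A →ₐ[R] B) : IsAlgHomFun R f :=
  ⟨f.toLinearMap.isLinear, f.map_one, f.map_mul⟩

noncomputable def IsAlgHomFun.toAlgHom {R A B : Type*} [CommRing R] [CommRing A] [Algebra R A]
    [Ring B] [Algebra R B] {φ : A → B} (hφ : IsAlgHomFun R φ) : A →ₐ[R] B :=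
  AlgHom.ofLinearMap (IsLinearMap.mk' φ hφ.1) hφ.2.1 hφ.2.2

structure IsLRTriple (R : Type*) [CommRing R] (A : Type*) [CommRing A] [Algebra R A]
    (L : Type*) [AddCommGroup L] [Module R L]
    (sm : A → L → L) (br : L → L → L) (an : L → A → A)
    (B : Type*) [Ring B] [Algebra R B] (φA : A → B) (φL : L → B) : Prop where
  isAlgHomFun : IsAlgHomFun R φA
  isLinearMap : IsLinearMap R φL
  map_sm : ∀ (a : A) (x : L), φA a * φL x = φL (sm a x)
  map_br : ∀ x y : L, φL (br x y) = φL x * φL y - φL y * φL x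
  map_an : ∀ (x : L) (a : A), φL x * φA a - φA a * φL x = φA (an x a)

section IsLRTriple

variable {R A L : Type*} [CommRing R] [CommRing A] [Algebra R A] [AddCommGroup L] [Module R L]
  {sm : A → L → L} {br : L → L → L} {an : L → A → A}

theorem isUniversalLR_iff {U : Type x} [Ring U] [Algebra R U] {ιA : A → U} {ιL : L → U} :
    IsUniversalLR R A L sm br an U ιA ιL ↔ IsLRTriple R A L sm br an U ιA ιL ∧
      ∀ (B : Type x) [Ring B] [Algebra R B] (φA : A → B) (φL : L → B),
        IsLRTriple R A L sm br an B φA φL →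
        ∃! f : U →ₐ[R] B, (∀ a, f (ιA a) = φA a) ∧ ∀ x, f (ιL x) = φL x := by
  constructor
  · rintro ⟨hA, hL, hsm, hbr, han, huniv⟩
    exact ⟨⟨hA, hL, hsm, hbr, han⟩, fun B _ _ φA φL ⟨hA, hL, hsm, hbr, han⟩ =>
      huniv B φA φL hA hL hsm hbr han⟩
  · rintro ⟨⟨hA, hL, hsm, hbr, han⟩, huniv⟩
    exact ⟨hA, hL, hsm, hbr, han, fun B _ _ φA φL hA hL hsm hbr han =>
      huniv B φA φL ⟨hA, hL, hsm, hbr, han⟩⟩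

namespace IsLRTriple

variable {B : Type*} [Ring B] [Algebra R B] {φA : A → B} {φL : L → B}

theorem algHom_comp (hφ : IsLRTriple R A L sm br an B φA φL) {C : Type*} [Ring C] [Algebra R C]
    (f : B →ₐ[R] C) : IsLRTriple R A L sm br an C (f ∘ φA) (f ∘ φL) where
  isAlgHomFun := (f.comp hφ.isAlgHomFun.toAlgHom).isAlgHomFun
  isLinearMap := (f.toLinearMap.comp (IsLinearMap.mk' φL hφ.isLinearMap)).isLinear
  map_sm a x := by simp only [Function.comp_apply, ← map_mul, hφ.map_sm]
  map_br x y := by simp only [Function.comp_apply, ← map_mul, ← map_sub, hφ.map_br]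
  map_an x a := by simp only [Function.comp_apply, ← map_mul, ← map_sub, hφ.map_an]

theorem codRestrict (hφ : IsLRTriple R A L sm br an B φA φL) (S : Subalgebra R B)
    (hA : ∀ a, φA a ∈ S) (hL : ∀ x, φL x ∈ S) :
    IsLRTriple R A L sm br an S (fun a => ⟨φA a, hA a⟩) (fun x => ⟨φL x, hL x⟩) where
  isAlgHomFun := ((hφ.isAlgHomFun.toAlgHom).codRestrict S hA).isAlgHomFun
  isLinearMap := ((IsLinearMap.mk' φL hφ.isLinearMap).codRestrict S.toSubmodule hL).isLinear
  map_sm a x := Subtype.ext (hφ.map_sm a x)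
  map_br x y := Subtype.ext (hφ.map_br x y)
  map_an x a := Subtype.ext (hφ.map_an x a)

theorem comp_isLRHom (hφ : IsLRTriple R A L sm br an B φA φL) {A₀ L₀ : Type*} [CommRing A₀]
    [Algebra R A₀] [AddCommGroup L₀] [Module R L₀] {sm₀ : A₀ → L₀ → L₀} {br₀ : L₀ → L₀ → L₀}
    {an₀ : L₀ → A₀ → A₀} {φ : A₀ → A} {ψ : L₀ → L}
    (hφψ : IsLRHom R sm₀ br₀ an₀ sm br an φ ψ) :
    IsLRTriple R A₀ L₀ sm₀ br₀ an₀ B (φA ∘ φ) (φL ∘ ψ) where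
  isAlgHomFun := (hφ.isAlgHomFun.toAlgHom.comp hφψ.1.toAlgHom).isAlgHomFun
  isLinearMap := ((IsLinearMap.mk' φL hφ.isLinearMap).comp
    (IsLinearMap.mk' ψ hφψ.2.1)).isLinear
  map_sm a x := by simp only [Function.comp_apply, hφ.map_sm, hφψ.2.2.2.1]
  map_br x y := by simp only [Function.comp_apply, hφ.map_br, hφψ.2.2.1]
  map_an x a := by simp only [Function.comp_apply, hφ.map_an, hφψ.2.2.2.2]

theorem commute_of_an_eq_zero (hφ : IsLRTriple R A L sm br an B φA φL) {x : L} {a : A}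
    (h : an x a = 0) : Commute (φL x) (φA a) :=
  sub_eq_zero.1 (by rw [hφ.map_an, h, hφ.isAlgHomFun.1.map_zero])

theorem commute_of_br_eq_zero (hφ : IsLRTriple R A L sm br an B φA φL) {x y : L}
    (h : br x y = 0) : Commute (φL x) (φL y) :=
  sub_eq_zero.1 (by rw [← hφ.map_br, h, hφ.isLinearMap.map_zero])

end IsLRTriple

namespace IsUniversalLR

variable {U : Type x} [Ring U] [Algebra R U] {ιA : A → U} {ιL : L → U}

theorem algHom_ext (hu : IsUniversalLR R A L sm br an U ιA ιL) {B : Type x} [Ring B]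
    [Algebra R B] {f g : U →ₐ[R] B} (hA : ∀ a, f (ιA a) = g (ιA a))
    (hL : ∀ x, f (ιL x) = g (ιL x)) : f = g := by
  obtain ⟨hU, huniv⟩ := isUniversalLR_iff.1 hu
  exact (huniv B _ _ (hU.algHom_comp g)).unique ⟨hA, hL⟩ ⟨fun _ => rfl, fun _ => rfl⟩

theorem adjoin_eq_top (hu : IsUniversalLR R A L sm br an U ιA ιL) :
    Algebra.adjoin R (Set.range ιA ∪ Set.range ιL) = ⊤ := by
  obtain ⟨hU, huniv⟩ := isUniversalLR_iff.1 hu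
  set S := Algebra.adjoin R (Set.range ιA ∪ Set.range ιL)
  have hA a : ιA a ∈ S := Algebra.subset_adjoin (Or.inl ⟨a, rfl⟩)
  have hL x : ιL x ∈ S := Algebra.subset_adjoin (Or.inr ⟨x, rfl⟩)
  obtain ⟨g, hg, -⟩ := huniv S _ _ (hU.codRestrict S hA hL)
  have hg_id : S.val.comp g = AlgHom.id R U :=
    hu.algHom_ext (fun a => congrArg Subtype.val (hg.1 a))
      (fun x => congrArg Subtype.val (hg.2 x))
  refine eq_top_iff.2 fun u _ => ?_
  have hgu : (g u : U) = u := AlgHom.congr_fun hg_id u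
  exact hgu ▸ (g u).2

theorem commute_of_commute_generators (hu : IsUniversalLR R A L sm br an U ιA ιL) {B : Type*}
    [Ring B] [Algebra R B] (f : U →ₐ[R] B) {c : B} (hA : ∀ a, Commute c (f (ιA a)))
    (hL : ∀ x, Commute c (f (ιL x))) (u : U) : Commute c (f u) := by
  have hle : Algebra.adjoin R (Set.range ιA ∪ Set.range ιL) ≤
      (Subalgebra.centralizer R {c}).comap f := by
    refine Algebra.adjoin_le ?_
    rintro _ (⟨a, rfl⟩ | ⟨x, rfl⟩) <;>
      simp only [SetLike.mem_coe, Subalgebra.mem_comap, Subalgebra.mem_centralizer_iff,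
        Set.mem_singleton_iff, forall_eq]
    exacts [hA a, hL x]
  exact (Subalgebra.mem_centralizer_iff R).1 (hle (hu.adjoin_eq_top ▸ Algebra.mem_top)) c rfl

end IsUniversalLR

end IsLRTriple

section Generators

variable {R A L : Type*} [CommRing R] [CommRing A] [Algebra R A] [AddCommGroup L] [Module R L]
  {sm : A → L → L} {br : L → L → L} {an : L → A → A}

/-- `G` generates `L` as an `A`-module, for the action `sm`; stated as an induction principle
since `sm` is not a `Module` instance. -/
def IsSMGenerating (sm : A → L → L) (G : Set L) : Prop :=
  ∀ motive : L → Prop, motive 0 → (∀ x y, motive x → motive y → motive (x + y)) →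
    (∀ a, ∀ g ∈ G, motive (sm a g)) → ∀ x, motive x

namespace IsLR

variable {B : Type*} [Ring B] [Algebra R B] {φA : A → B} {φL : L → B}

theorem map_br_sm_left (h : IsLR R A L sm br an) (hφL : IsLinearMap R φL)
    (hsm : ∀ a x, φA a * φL x = φL (sm a x))
    (han : ∀ x a, φL x * φA a - φA a * φL x = φA (an x a)) {x y : L}
    (hxy : φL (br x y) = φL x * φL y - φL y * φL x) (a : A) :
    φL (br (sm a x) y) = φL (sm a x) * φL y - φL y * φL (sm a x) := by
  rw [h.br_sm_left, hφL.map_sub, ← hsm, ← hsm, hxy, ← han, ← hsm]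
  noncomm_ring

theorem map_br_swap (h : IsLR R A L sm br an) (hφL : IsLinearMap R φL) {x y : L}
    (hxy : φL (br x y) = φL x * φL y - φL y * φL x) :
    φL (br y x) = φL y * φL x - φL x * φL y := by
  rw [← h.br_skew, hφL.map_neg, hxy, neg_sub]

/-- For fixed `y`, the `x` satisfying the bracket relation are closed under the action of `A`
(`map_br_sm_left`), and the relation is antisymmetric (`map_br_swap`). -/
theorem map_br_of_generators (h : IsLR R A L sm br an) (hφL : IsLinearMap R φL)
    (hsm : ∀ a x, φA a * φL x = φL (sm a x))
    (han : ∀ x a, φL x * φA a - φA a * φL x = φA (an x a)) {G : Set L}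
    (hG : IsSMGenerating sm G)
    (hGG : ∀ g ∈ G, ∀ g' ∈ G, φL (br g g') = φL g * φL g' - φL g' * φL g) (x y : L) :
    φL (br x y) = φL x * φL y - φL y * φL x := by
  have of_generators_left : ∀ y, (∀ g ∈ G, φL (br g y) = φL g * φL y - φL y * φL g) →
      ∀ x, φL (br x y) = φL x * φL y - φL y * φL x := by
    intro y hy
    refine hG _ ?_ ?_ (fun a g hg => h.map_br_sm_left hφL hsm han (hy g hg) a)
    · rw [h.zero_br, hφL.map_zero, zero_mul, mul_zero, sub_zero]
    · intro x x' hx hx'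
      rw [h.add_br, hφL.map_add, hφL.map_add, hx, hx', add_mul, mul_add]
      abel
  exact of_generators_left y (fun g hg => h.map_br_swap hφL
    (of_generators_left g (fun g' hg' => hGG g' hg' g hg) y)) x

end IsLR

end Generators

theorem TensorProduct.prod_induction_on {R M N P Q : Type*} [CommSemiring R] [AddCommMonoid M]
    [AddCommMonoid N] [AddCommMonoid P] [AddCommMonoid Q] [Module R M] [Module R N] [Module R P]
    [Module R Q] {motive : (M ⊗[R] N) × (P ⊗[R] Q) → Prop} (x : (M ⊗[R] N) × (P ⊗[R] Q))
    (zero : motive 0) (add : ∀ x y, motive x → motive y → motive (x + y))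
    (inl : ∀ m n, motive (m ⊗ₜ n, 0)) (inr : ∀ p q, motive (0, p ⊗ₜ q)) : motive x := by
  obtain ⟨y, z⟩ := x
  rw [show ((y, z) : (M ⊗[R] N) × (P ⊗[R] Q)) = (y, 0) + (0, z) by simp]
  refine add _ _ ?_ ?_
  · induction y using TensorProduct.induction_on with
    | zero => exact zero
    | tmul m n => exact inl m n
    | add y y' hy hy' => simpa using add _ _ hy hy'
  · induction z using TensorProduct.induction_on with
    | zero => exact zero
    | tmul p q => exact inr p q
    | add z z' hz hz' => simpa using add _ _ hz hz'

noncomputable def tensorCoprod {R M N P : Type*} [CommSemiring R] [AddCommMonoid M]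
    [AddCommMonoid N] [AddCommMonoid P] [Module R M] [Module R N] [Module R P]
    (f : M →ₗ[R] P) (g : N →ₗ[R] P) : (M ⊗[R] N) × (N ⊗[R] M) →ₗ[R] P ⊗[R] P :=
  (TensorProduct.map f g).coprod (TensorProduct.map g f)

section tensorCoprod

variable {R M N P : Type*} [CommSemiring R] [AddCommMonoid M] [AddCommMonoid N] [AddCommMonoid P]
  [Module R M] [Module R N] [Module R P] (f : M →ₗ[R] P) (g : N →ₗ[R] P)

@[simp]
theorem tensorCoprod_inl (m : M) (n : N) : tensorCoprod f g (m ⊗ₜ n, 0) = f m ⊗ₜ g n := by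
  simp [tensorCoprod]

@[simp]
theorem tensorCoprod_inr (n : N) (m : M) : tensorCoprod f g (0, n ⊗ₜ m) = g n ⊗ₜ f m := by
  simp [tensorCoprod]

end tensorCoprod

structure IsTensorSquareLR (R : Type*) [CommRing R] (A : Type*) [CommRing A] [Algebra R A]
    (L : Type*) [AddCommGroup L] [Module R L]
    (sm : A → L → L) (br : L → L → L) (an : L → A → A)
    (SM : A ⊗[R] A → (L ⊗[R] A) × (A ⊗[R] L) → (L ⊗[R] A) × (A ⊗[R] L))
    (BR : (L ⊗[R] A) × (A ⊗[R] L) → (L ⊗[R] A) × (A ⊗[R] L) → (L ⊗[R] A) × (A ⊗[R] L))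
    (AN : (L ⊗[R] A) × (A ⊗[R] L) → A ⊗[R] A → A ⊗[R] A) : Prop where
  isLR : IsLR R (A ⊗[R] A) ((L ⊗[R] A) × (A ⊗[R] L)) SM BR AN
  sm_tmul : ∀ (a c b : A) (α β : L),
    SM (a ⊗ₜ[R] b) (α ⊗ₜ[R] c, c ⊗ₜ[R] β) = ((sm a α) ⊗ₜ[R] (b * c), (a * c) ⊗ₜ[R] (sm b β))
  an_inl : ∀ (α : L) (a b b' : A), AN (α ⊗ₜ[R] a, 0) (b ⊗ₜ[R] b') = (an α b) ⊗ₜ[R] (a * b')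
  an_inr : ∀ (a b b' : A) (α : L), AN (0, a ⊗ₜ[R] α) (b ⊗ₜ[R] b') = (a * b) ⊗ₜ[R] (an α b')
  br_inl_inl : ∀ α β : L, BR (α ⊗ₜ[R] 1, 0) (β ⊗ₜ[R] 1, 0) = ((br α β) ⊗ₜ[R] 1, 0)
  br_inr_inr : ∀ α β : L, BR (0, 1 ⊗ₜ[R] α) (0, 1 ⊗ₜ[R] β) = (0, 1 ⊗ₜ[R] (br α β))
  br_inl_inr : ∀ α β : L, BR (α ⊗ₜ[R] 1, 0) (0, 1 ⊗ₜ[R] β) = 0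

def tensorSquareGen (R A L : Type*) [CommRing R] [CommRing A] [Algebra R A] [AddCommGroup L]
    [Module R L] : L ⊕ L → (L ⊗[R] A) × (A ⊗[R] L) :=
  Sum.elim (fun α => (α ⊗ₜ 1, 0)) (fun α => (0, 1 ⊗ₜ α))

namespace IsTensorSquareLR

variable {R A L : Type*} [CommRing R] [CommRing A] [Algebra R A] [AddCommGroup L] [Module R L]
  {sm : A → L → L} {br : L → L → L} {an : L → A → A}
  {SM : A ⊗[R] A → (L ⊗[R] A) × (A ⊗[R] L) → (L ⊗[R] A) × (A ⊗[R] L)}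
  {BR : (L ⊗[R] A) × (A ⊗[R] L) → (L ⊗[R] A) × (A ⊗[R] L) → (L ⊗[R] A) × (A ⊗[R] L)}
  {AN : (L ⊗[R] A) × (A ⊗[R] L) → A ⊗[R] A → A ⊗[R] A}

theorem sm_inl (h : IsLR R A L sm br an) (hT : IsTensorSquareLR R A L sm br an SM BR AN)
    (a b : A) (α : L) (c : A) : SM (a ⊗ₜ b) (α ⊗ₜ c, 0) = (sm a α ⊗ₜ (b * c), 0) := by
  simpa only [tmul_zero, h.sm_zero] using hT.sm_tmul a c b α 0

theorem sm_inr (h : IsLR R A L sm br an) (hT : IsTensorSquareLR R A L sm br an SM BR AN)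
    (a b c : A) (β : L) : SM (a ⊗ₜ b) (0, c ⊗ₜ β) = (0, (a * c) ⊗ₜ sm b β) := by
  simpa only [zero_tmul, h.sm_zero] using hT.sm_tmul a c b 0 β

theorem isSMGenerating (h : IsLR R A L sm br an) (hT : IsTensorSquareLR R A L sm br an SM BR AN) :
    IsSMGenerating SM (Set.range (tensorSquareGen R A L)) := by
  intro motive zero add gen x
  induction x using TensorProduct.prod_induction_on with
  | zero => exact zero
  | add x y hx hy => exact add x y hx hy
  | inl α a =>
    simpa only [tensorSquareGen, Sum.elim_inl, hT.sm_inl h, h.one_sm, mul_one] using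
      gen (1 ⊗ₜ a) _ ⟨Sum.inl α, rfl⟩
  | inr a α =>
    simpa only [tensorSquareGen, Sum.elim_inr, hT.sm_inr h, h.one_sm, mul_one] using
      gen (a ⊗ₜ 1) _ ⟨Sum.inr α, rfl⟩

theorem isLRHom_inl (h : IsLR R A L sm br an) (hT : IsTensorSquareLR R A L sm br an SM BR AN) :
    IsLRHom R sm br an SM BR AN (fun a => a ⊗ₜ[R] (1 : A)) (fun α => (α ⊗ₜ[R] (1 : A), 0)) :=
  ⟨(Algebra.TensorProduct.includeLeft : A →ₐ[R] A ⊗[R] A).isAlgHomFun,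
    (LinearMap.inl R _ (A ⊗[R] L) ∘ₗ (TensorProduct.mk R L A).flip 1).isLinear,
    fun α β => (hT.br_inl_inl α β).symm, fun a α => by rw [hT.sm_inl h, mul_one],
    fun α a => by rw [hT.an_inl, mul_one]⟩

theorem isLRHom_inr (h : IsLR R A L sm br an) (hT : IsTensorSquareLR R A L sm br an SM BR AN) :
    IsLRHom R sm br an SM BR AN (fun a => (1 : A) ⊗ₜ[R] a) (fun α => (0, (1 : A) ⊗ₜ[R] α)) :=
  ⟨(Algebra.TensorProduct.includeRight : A →ₐ[R] A ⊗[R] A).isAlgHomFun,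
    (LinearMap.inr R (L ⊗[R] A) _ ∘ₗ TensorProduct.mk R A L 1).isLinear,
    fun α β => (hT.br_inr_inr α β).symm, fun a α => by rw [hT.sm_inr h, mul_one],
    fun α a => by rw [hT.an_inr, mul_one]⟩

end IsTensorSquareLR

namespace IsLRTriple

variable {R A L : Type*} [CommRing R] [CommRing A] [Algebra R A] [AddCommGroup L] [Module R L]
  {sm : A → L → L} {br : L → L → L} {an : L → A → A}
  {SM : A ⊗[R] A → (L ⊗[R] A) × (A ⊗[R] L) → (L ⊗[R] A) × (A ⊗[R] L)}
  {BR : (L ⊗[R] A) × (A ⊗[R] L) → (L ⊗[R] A) × (A ⊗[R] L) → (L ⊗[R] A) × (A ⊗[R] L)}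
  {AN : (L ⊗[R] A) × (A ⊗[R] L) → A ⊗[R] A → A ⊗[R] A}
  {U : Type*} [Ring U] [Algebra R U] {iA : A →ₐ[R] U} {iL : L →ₗ[R] U}

theorem tensor_map_sm (h : IsLR R A L sm br an) (hT : IsTensorSquareLR R A L sm br an SM BR AN)
    (hU : IsLRTriple R A L sm br an U iA iL) (c : A ⊗[R] A) (x : (L ⊗[R] A) × (A ⊗[R] L)) :
    Algebra.TensorProduct.map iA iA c * tensorCoprod iL iA.toLinearMap x =
      tensorCoprod iL iA.toLinearMap (SM c x) := by
  induction c using TensorProduct.induction_on with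
  | zero => rw [map_zero, zero_mul, hT.isLR.zero_sm, map_zero]
  | add c c' hc hc' => rw [map_add, add_mul, hc, hc', hT.isLR.add_sm, map_add]
  | tmul a b =>
    induction x using TensorProduct.prod_induction_on with
    | zero => rw [map_zero, mul_zero, hT.isLR.sm_zero, map_zero]
    | add x y hx hy => rw [map_add, mul_add, hx, hy, hT.isLR.sm_add, map_add]
    | inl α c =>
      simp only [hT.sm_inl h, tensorCoprod_inl, Algebra.TensorProduct.map_tmul,
        AlgHom.toLinearMap_apply, Algebra.TensorProduct.tmul_mul_tmul, hU.map_sm, map_mul]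
    | inr c β =>
      simp only [hT.sm_inr h, tensorCoprod_inr, Algebra.TensorProduct.map_tmul,
        AlgHom.toLinearMap_apply, Algebra.TensorProduct.tmul_mul_tmul, hU.map_sm, map_mul]

theorem tensor_map_an (hT : IsTensorSquareLR R A L sm br an SM BR AN)
    (hU : IsLRTriple R A L sm br an U iA iL) (x : (L ⊗[R] A) × (A ⊗[R] L)) (c : A ⊗[R] A) :
    tensorCoprod iL iA.toLinearMap x * Algebra.TensorProduct.map iA iA c -
        Algebra.TensorProduct.map iA iA c * tensorCoprod iL iA.toLinearMap x =
      Algebra.TensorProduct.map iA iA (AN x c) := by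
  induction c using TensorProduct.induction_on with
  | zero => rw [map_zero, mul_zero, zero_mul, sub_zero, hT.isLR.an_zero, map_zero]
  | add c c' hc hc' =>
    rw [map_add, mul_add, add_mul, hT.isLR.an_add, map_add, ← hc, ← hc']
    abel
  | tmul b b' =>
    induction x using TensorProduct.prod_induction_on with
    | zero => rw [map_zero, zero_mul, mul_zero, sub_zero, hT.isLR.zero_an, map_zero]
    | add x y hx hy =>
      rw [map_add, add_mul, mul_add, hT.isLR.add_an, map_add, ← hx, ← hy]
      abel
    | inl α a =>
      rw [hT.an_inl, tensorCoprod_inl, Algebra.TensorProduct.map_tmul,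
        Algebra.TensorProduct.map_tmul, AlgHom.toLinearMap_apply,
        Algebra.TensorProduct.tmul_mul_tmul, Algebra.TensorProduct.tmul_mul_tmul, ← map_mul,
        ← map_mul, mul_comm b' a, ← sub_tmul, hU.map_an]
    | inr a α =>
      rw [hT.an_inr, tensorCoprod_inr, Algebra.TensorProduct.map_tmul,
        Algebra.TensorProduct.map_tmul, AlgHom.toLinearMap_apply,
        Algebra.TensorProduct.tmul_mul_tmul, Algebra.TensorProduct.tmul_mul_tmul, ← map_mul,
        ← map_mul, mul_comm b a, ← tmul_sub, hU.map_an]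

theorem tensor_map_br_generators (hT : IsTensorSquareLR R A L sm br an SM BR AN)
    (hU : IsLRTriple R A L sm br an U iA iL) :
    ∀ g ∈ Set.range (tensorSquareGen R A L), ∀ g' ∈ Set.range (tensorSquareGen R A L),
      tensorCoprod iL iA.toLinearMap (BR g g') =
        tensorCoprod iL iA.toLinearMap g * tensorCoprod iL iA.toLinearMap g' -
          tensorCoprod iL iA.toLinearMap g' * tensorCoprod iL iA.toLinearMap g := by
  rintro _ ⟨α | α, rfl⟩ _ ⟨β | β, rfl⟩ <;>
    simp only [tensorSquareGen, Sum.elim_inl, Sum.elim_inr]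
  · simp only [hT.br_inl_inl, tensorCoprod_inl, AlgHom.toLinearMap_apply, map_one,
      Algebra.TensorProduct.tmul_mul_tmul, mul_one, hU.map_br, sub_tmul]
  · simp [hT.br_inl_inr, Algebra.TensorProduct.tmul_mul_tmul]
  · rw [← hT.isLR.br_skew, hT.br_inl_inr, neg_zero]
    simp [Algebra.TensorProduct.tmul_mul_tmul]
  · simp only [hT.br_inr_inr, tensorCoprod_inr, AlgHom.toLinearMap_apply, map_one,
      Algebra.TensorProduct.tmul_mul_tmul, mul_one, hU.map_br, tmul_sub]

theorem tensor (h : IsLR R A L sm br an) (hT : IsTensorSquareLR R A L sm br an SM BR AN)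
    (hU : IsLRTriple R A L sm br an U iA iL) :
    IsLRTriple R (A ⊗[R] A) ((L ⊗[R] A) × (A ⊗[R] L)) SM BR AN (U ⊗[R] U)
      (Algebra.TensorProduct.map iA iA) (tensorCoprod iL iA.toLinearMap) where
  isAlgHomFun := AlgHom.isAlgHomFun _
  isLinearMap := LinearMap.isLinear _
  map_sm := hU.tensor_map_sm h hT
  map_br := hT.isLR.map_br_of_generators (LinearMap.isLinear _) (hU.tensor_map_sm h hT)
    (hU.tensor_map_an hT) (hT.isSMGenerating h) (hU.tensor_map_br_generators hT)
  map_an := hU.tensor_map_an hT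

end IsLRTriple

namespace IsUniversalLR

variable {R A L : Type*} [CommRing R] [CommRing A] [Algebra R A] [AddCommGroup L] [Module R L]
  {sm : A → L → L} {br : L → L → L} {an : L → A → A}
  {SM : A ⊗[R] A → (L ⊗[R] A) × (A ⊗[R] L) → (L ⊗[R] A) × (A ⊗[R] L)}
  {BR : (L ⊗[R] A) × (A ⊗[R] L) → (L ⊗[R] A) × (A ⊗[R] L) → (L ⊗[R] A) × (A ⊗[R] L)}
  {AN : (L ⊗[R] A) × (A ⊗[R] L) → A ⊗[R] A → A ⊗[R] A}
  {U : Type x} [Ring U] [Algebra R U] {iA : A →ₐ[R] U} {iL : L →ₗ[R] U}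

theorem tensor_algHom_ext (hu : IsUniversalLR R A L sm br an U iA iL) {B : Type x} [Ring B]
    [Algebra R B] {F G : U ⊗[R] U →ₐ[R] B}
    (hA : ∀ c, F (Algebra.TensorProduct.map iA iA c) = G (Algebra.TensorProduct.map iA iA c))
    (hL : ∀ x, F (tensorCoprod iL iA.toLinearMap x) = G (tensorCoprod iL iA.toLinearMap x)) :
    F = G := by
  refine Algebra.TensorProduct.ext (hu.algHom_ext (fun a => ?_) (fun α => ?_))
    (hu.algHom_ext (fun a => ?_) (fun α => ?_))
  · simpa using hA (a ⊗ₜ 1)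
  · simpa using hL (α ⊗ₜ 1, 0)
  · simpa using hA (1 ⊗ₜ a)
  · simpa using hL (0, 1 ⊗ₜ α)

theorem exists_tensor_lift (h : IsLR R A L sm br an)
    (hT : IsTensorSquareLR R A L sm br an SM BR AN) (hu : IsUniversalLR R A L sm br an U iA iL)
    {B : Type x} [Ring B] [Algebra R B] {φA : A ⊗[R] A → B} {φL : (L ⊗[R] A) × (A ⊗[R] L) → B}
    (hφ : IsLRTriple R (A ⊗[R] A) ((L ⊗[R] A) × (A ⊗[R] L)) SM BR AN B φA φL) :
    ∃ F : U ⊗[R] U →ₐ[R] B, (∀ c, F (Algebra.TensorProduct.map iA iA c) = φA c) ∧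
      ∀ x, F (tensorCoprod iL iA.toLinearMap x) = φL x := by
  obtain ⟨-, huniv⟩ := isUniversalLR_iff.1 hu
  obtain ⟨f₁, ⟨hf₁A, hf₁L⟩, -⟩ := huniv B _ _ (hφ.comp_isLRHom (hT.isLRHom_inl h))
  obtain ⟨f₂, ⟨hf₂A, hf₂L⟩, -⟩ := huniv B _ _ (hφ.comp_isLRHom (hT.isLRHom_inr h))
  have hAA a b : Commute (φA (a ⊗ₜ 1)) (φA (1 ⊗ₜ b)) :=
    (Commute.all _ _).map hφ.isAlgHomFun.toAlgHom
  have hAL a β : Commute (φA (a ⊗ₜ 1)) (φL (0, 1 ⊗ₜ β)) :=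
    (hφ.commute_of_an_eq_zero (by rw [hT.an_inr, h.an_one, tmul_zero])).symm
  have hLA α b : Commute (φL (α ⊗ₜ 1, 0)) (φA (1 ⊗ₜ b)) :=
    hφ.commute_of_an_eq_zero (by rw [hT.an_inl, h.an_one, zero_tmul])
  have hLL α β : Commute (φL (α ⊗ₜ 1, 0)) (φL (0, 1 ⊗ₜ β)) :=
    hφ.commute_of_br_eq_zero (hT.br_inl_inr α β)
  have hcomm u v : Commute (f₁ u) (f₂ v) := by
    refine (hu.commute_of_commute_generators f₁ (fun a => ?_) (fun α => ?_) u).symm <;>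
      refine (hu.commute_of_commute_generators f₂ (fun b => ?_) (fun β => ?_) v).symm
    · rw [hf₁A, hf₂A]; exact hAA a b
    · rw [hf₁A, hf₂L]; exact hAL a β
    · rw [hf₁L, hf₂A]; exact hLA α b
    · rw [hf₁L, hf₂L]; exact hLL α β
  refine ⟨Algebra.TensorProduct.lift f₁ f₂ hcomm, fun c => ?_, fun x => ?_⟩
  · induction c using TensorProduct.induction_on with
    | zero => rw [map_zero, map_zero, hφ.isAlgHomFun.1.map_zero]
    | add c c' hc hc' => rw [map_add, map_add, hc, hc', hφ.isAlgHomFun.1.map_add]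
    | tmul a b =>
      rw [Algebra.TensorProduct.map_tmul, Algebra.TensorProduct.lift_tmul, hf₁A, hf₂A]
      simp only [Function.comp_apply, ← hφ.isAlgHomFun.2.2,
        Algebra.TensorProduct.tmul_mul_tmul, mul_one, one_mul]
  · induction x using TensorProduct.prod_induction_on with
    | zero => rw [map_zero, map_zero, hφ.isLinearMap.map_zero]
    | add x y hx hy => rw [map_add, map_add, hx, hy, hφ.isLinearMap.map_add]
    | inl α a =>
      rw [tensorCoprod_inl, AlgHom.toLinearMap_apply, Algebra.TensorProduct.lift_tmul, hf₁L,
        hf₂A]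
      simp only [Function.comp_apply, (hLA α a).eq, hφ.map_sm, hT.sm_inl h, h.one_sm, mul_one]
    | inr a α =>
      rw [tensorCoprod_inr, AlgHom.toLinearMap_apply, Algebra.TensorProduct.lift_tmul, hf₁A,
        hf₂L]
      simp only [Function.comp_apply, hφ.map_sm, hT.sm_inr h, h.one_sm, mul_one]

theorem tensor (h : IsLR R A L sm br an) (hT : IsTensorSquareLR R A L sm br an SM BR AN)
    (hu : IsUniversalLR R A L sm br an U iA iL) :
    IsUniversalLR R (A ⊗[R] A) ((L ⊗[R] A) × (A ⊗[R] L)) SM BR AN (U ⊗[R] U)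
      (Algebra.TensorProduct.map iA iA) (tensorCoprod iL iA.toLinearMap) := by
  refine isUniversalLR_iff.2 ⟨(isUniversalLR_iff.1 hu).1.tensor h hT, fun B _ _ φA φL hφ => ?_⟩
  obtain ⟨F, hFA, hFL⟩ := hu.exists_tensor_lift h hT hφ
  exact ⟨F, ⟨hFA, hFL⟩, fun G ⟨hGA, hGL⟩ => hu.tensor_algHom_ext
    (fun c => (hGA c).trans (hFA c).symm) (fun x => (hGL x).trans (hFL x).symm)⟩

end IsUniversalLR

/-- the algebra `U(A,L) ⊗ U(A,L)`, with `ιA ⊗ ιA` and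
`ιL ⊗ ιA ⊕ ιA ⊗ ιL`, satisfies the universal property of the universal algebra
`U(A ⊗ A, L ⊗ A ⊕ A ⊗ L)` of the natural `(R, A ⊗ A)`-Lie algebra structure
on `L ⊗ A ⊕ A ⊗ L`; hence the two algebras are canonically isomorphic. -/
theorem stmt12 (R : Type u) [CommRing R] (A : Type v) [CommRing A] [Algebra R A]
    (L : Type v) [AddCommGroup L] [Module R L]
    (sm : A → L → L) (br : L → L → L) (an : L → A → A)
    (h : IsLR R A L sm br an)
    -- the natural `(R, A ⊗ A)`-Lie algebra structure on `L ⊗ A ⊕ A ⊗ L`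
    (SM : A ⊗[R] A → (L ⊗[R] A) × (A ⊗[R] L) → (L ⊗[R] A) × (A ⊗[R] L))
    (BR : (L ⊗[R] A) × (A ⊗[R] L) → (L ⊗[R] A) × (A ⊗[R] L) →
      (L ⊗[R] A) × (A ⊗[R] L))
    (AN : (L ⊗[R] A) × (A ⊗[R] L) → A ⊗[R] A → A ⊗[R] A)
    (hLR : IsLR R (A ⊗[R] A) ((L ⊗[R] A) × (A ⊗[R] L)) SM BR AN)
    (hSM : ∀ (a c b : A) (α β : L),
      SM (a ⊗ₜ[R] b) (α ⊗ₜ[R] c, c ⊗ₜ[R] β) =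
        ((sm a α) ⊗ₜ[R] (b * c), (a * c) ⊗ₜ[R] (sm b β)))
    (hAN₁ : ∀ (α : L) (a b b' : A),
      AN (α ⊗ₜ[R] a, 0) (b ⊗ₜ[R] b') = (an α b) ⊗ₜ[R] (a * b'))
    (hAN₂ : ∀ (a b b' : A) (α : L),
      AN (0, a ⊗ₜ[R] α) (b ⊗ₜ[R] b') = (a * b) ⊗ₜ[R] (an α b'))
    (hBR₁ : ∀ α β : L, BR (α ⊗ₜ[R] 1, 0) (β ⊗ₜ[R] 1, 0) = ((br α β) ⊗ₜ[R] 1, 0))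
    (hBR₂ : ∀ α β : L, BR (0, 1 ⊗ₜ[R] α) (0, 1 ⊗ₜ[R] β) = (0, 1 ⊗ₜ[R] (br α β)))
    (hBR₃ : ∀ α β : L, BR (α ⊗ₜ[R] 1, 0) (0, 1 ⊗ₜ[R] β) = 0)
    -- the universal algebra of `(A, L)`
    (U : Type v) [Ring U] [Algebra R U] (ιA : A → U) (ιL : L → U)
    (hu : IsUniversalLR R A L sm br an U ιA ιL) :
    ∃ (jA : A ⊗[R] A → U ⊗[R] U)
      (jL : (L ⊗[R] A) × (A ⊗[R] L) → U ⊗[R] U),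
      (∀ a b : A, jA (a ⊗ₜ[R] b) = ιA a ⊗ₜ[R] ιA b) ∧
      (∀ (α : L) (a : A), jL (α ⊗ₜ[R] a, 0) = ιL α ⊗ₜ[R] ιA a) ∧
      (∀ (a : A) (α : L), jL (0, a ⊗ₜ[R] α) = ιA a ⊗ₜ[R] ιL α) ∧
      IsUniversalLR R (A ⊗[R] A) ((L ⊗[R] A) × (A ⊗[R] L)) SM BR AN
        (U ⊗[R] U) jA jL := by
  have hU := (isUniversalLR_iff.1 hu).1
  let iA : A →ₐ[R] U := hU.isAlgHomFun.toAlgHom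
  let iL : L →ₗ[R] U := IsLinearMap.mk' ιL hU.isLinearMap
  have hu' : IsUniversalLR R A L sm br an U iA iL := hu
  exact ⟨Algebra.TensorProduct.map iA iA, tensorCoprod iL iA.toLinearMap,
    fun a b => Algebra.TensorProduct.map_tmul iA iA a b, fun α a => tensorCoprod_inl _ _ α a,
    fun a α => tensorCoprod_inr _ _ a α,
    hu'.tensor h ⟨hLR, hSM, hAN₁, hAN₂, hBR₁, hBR₂, hBR₃⟩⟩
end
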